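/- arXiv:2204.13083 — 11 statements merged into one kernel-verified Lean document; each statement's English description precedes it below -/
import Mathlib

section
/- Define r(0) = Σ_{i=0}^{τ̄} α_i² p_i (1−p_i), r(l) = −Σ_{i=0}^{τ̄−l} α_i α_{i+l} p_i p_{i+l} for 1 ≤ l ≤ τ̄, and r(−l) = r(l). Then for every nonzero complex number z, the energy spectral density satisfies Σ_{l=−τ̄}^{τ̄} r(l)·z^{−l} = (1/2)·Σ_{i₁=0}^{τ̄} Σ_{i₂=0}^{τ̄} (α_{i₁} z^{i₁} − α_{i₂} z^{i₂})·(α_{i₁} z^{−i₁} − α_{i₂} z^{−i₂})·p_{i₁}·p_{i₂}. -/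
/-- With `r 0 = Σ_{i} α i ^ 2 p i (1 - p i)`,
`r l = -Σ_{i=0}^{τbar-l} α i α (i+l) p i p (i+l)` for `1 ≤ l ≤ τbar` and `r (-l) = r l`,
the energy spectral density satisfies, for every nonzero complex `z`,
`Σ_{l=-τbar}^{τbar} r l ⬝ z^{-l}
  = (1/2) Σ_{i₁,i₂} (α i₁ z^{i₁} - α i₂ z^{i₂})(α i₁ z^{-i₁} - α i₂ z^{-i₂}) p i₁ p i₂`. -/
theorem stmt3
    (τbar : ℕ) (p α : ℕ → ℝ)
    (hp : ∀ i, 0 ≤ p i) (hpsum : ∑ i ∈ Finset.range (τbar + 1), p i = 1)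
    (r : ℤ → ℝ)
    (hr0 : r 0 = ∑ i ∈ Finset.range (τbar + 1), α i ^ 2 * p i * (1 - p i))
    (hrl : ∀ l : ℕ, 1 ≤ l → l ≤ τbar →
      r l = -∑ i ∈ Finset.range (τbar - l + 1), α i * α (i + l) * p i * p (i + l))
    (hrneg : ∀ l : ℤ, r (-l) = r l)
    (z : ℂ) (hz : z ≠ 0) :
    ∑ l ∈ Finset.Icc (-(τbar : ℤ)) (τbar : ℤ), (r l : ℂ) * z ^ (-l) =
      (1 / 2) * ∑ i₁ ∈ Finset.range (τbar + 1), ∑ i₂ ∈ Finset.range (τbar + 1),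
        ((α i₁ : ℂ) * z ^ (i₁ : ℤ) - (α i₂ : ℂ) * z ^ (i₂ : ℤ)) *
        ((α i₁ : ℂ) * z ^ (-(i₁ : ℤ)) - (α i₂ : ℂ) * z ^ (-(i₂ : ℤ))) *
        (p i₁ : ℂ) * (p i₂ : ℂ) := by
  classical
  set F : ℕ → ℕ → ℂ := fun i₁ i₂ =>
    ((α i₁ * α i₂ * p i₁ * p i₂ : ℝ) : ℂ) * z ^ ((i₁ : ℤ) - (i₂ : ℤ)) with hF
  set A : ℂ := ((∑ i ∈ Finset.range (τbar + 1), α i ^ 2 * p i : ℝ) : ℂ) with hA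
  -- reindex l ↦ -l on the LHS
  have hneg : ∑ l ∈ Finset.Icc (-(τbar : ℤ)) (τbar : ℤ), (r l : ℂ) * z ^ (-l)
      = ∑ l ∈ Finset.Icc (-(τbar : ℤ)) (τbar : ℤ), (r l : ℂ) * z ^ l := by
    refine Finset.sum_nbij' (fun l => -l) (fun l => -l) ?_ ?_ ?_ ?_ ?_
    · intro a ha; simp only [Finset.mem_Icc] at *; omega
    · intro a ha; simp only [Finset.mem_Icc] at *; omega
    · intro a _; ring
    · intro a _; ring
    · intro a _; simp [hrneg a]
  -- the key reindexing: double sum over the square = sum over diagonals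
  have key : ∑ l ∈ Finset.Icc (-(τbar : ℤ)) (τbar : ℤ),
        ∑ i ∈ Finset.range (τbar + 1 - l.natAbs), F (i + l.toNat) (i + (-l).toNat)
      = ∑ i₁ ∈ Finset.range (τbar + 1), ∑ i₂ ∈ Finset.range (τbar + 1), F i₁ i₂ := by
    rw [Finset.sum_sigma' (Finset.Icc (-(τbar : ℤ)) (τbar : ℤ))
      (fun l => Finset.range (τbar + 1 - l.natAbs))
      (fun l i => F (i + l.toNat) (i + (-l).toNat)),
      ← Finset.sum_product' (Finset.range (τbar + 1)) (Finset.range (τbar + 1)) (fun i₁ i₂ => F i₁ i₂)]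
    refine Finset.sum_nbij' (fun q => (q.2 + q.1.toNat, q.2 + (-q.1).toNat))
      (fun q => ⟨(q.1 : ℤ) - (q.2 : ℤ), min q.1 q.2⟩) ?_ ?_ ?_ ?_ ?_
    · rintro ⟨l, i⟩ hq
      simp only [Finset.mem_sigma, Finset.mem_Icc, Finset.mem_range, Finset.mem_product] at *
      omega
    · rintro ⟨i₁, i₂⟩ hq
      simp only [Finset.mem_sigma, Finset.mem_Icc, Finset.mem_range, Finset.mem_product] at *
      constructor
      · constructor <;> omega
      · omega
    · rintro ⟨l, i⟩ hq
      simp only [Finset.mem_sigma, Finset.mem_Icc, Finset.mem_range] at hq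
      have h1 : ((i + l.toNat : ℕ) : ℤ) - ((i + (-l).toNat : ℕ) : ℤ) = l := by
        push_cast; omega
      have h2 : min (i + l.toNat) (i + (-l).toNat) = i := by omega
      simp only [Sigma.mk.inj_iff]
      exact ⟨h1, heq_of_eq (by rw [h2])⟩
    · rintro ⟨i₁, i₂⟩ hq
      simp only [Finset.mem_product, Finset.mem_range] at hq
      simp only [Prod.mk.injEq]
      omega
    · rintro ⟨l, i⟩ _; rfl
  -- per-diagonal evaluation
  have hterm : ∀ l ∈ Finset.Icc (-(τbar : ℤ)) (τbar : ℤ),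
      (r l : ℂ) * z ^ l = (if l = 0 then A else 0)
        - ∑ i ∈ Finset.range (τbar + 1 - l.natAbs), F (i + l.toNat) (i + (-l).toNat) := by
    intro l hl
    simp only [Finset.mem_Icc] at hl
    rcases lt_trichotomy l 0 with h | h | h
    · obtain ⟨n, hn, rfl⟩ : ∃ n : ℕ, 1 ≤ n ∧ l = -(n : ℤ) :=
        ⟨l.natAbs, by omega, by omega⟩
      have hτ : n ≤ τbar := by omega
      have hne : (-(n : ℤ) : ℤ) ≠ 0 := by omega
      rw [if_neg hne, hrneg, hrl n hn hτ]
      have hrange : τbar + 1 - (-(n : ℤ)).natAbs = τbar - n + 1 := by omega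
      have ht : (-(n : ℤ)).toNat = 0 := by omega
      have ht2 : (-(-(n : ℤ))).toNat = n := by omega
      rw [hrange, ht, ht2]
      simp only [hF]
      push_cast
      rw [neg_mul, zero_sub, neg_inj, Finset.sum_mul]
      refine Finset.sum_congr rfl fun i _ => ?_
      have he : ((i : ℤ) + 0 - ((i : ℤ) + n)) = -(n : ℤ) := by ring
      rw [he]
      push_cast
      ring
    · subst h
      rw [if_pos rfl, hr0]
      have hrange : τbar + 1 - (0 : ℤ).natAbs = τbar + 1 := by omega
      rw [hrange]
      simp only [hF, hA, zpow_zero, mul_one]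
      push_cast
      rw [← Finset.sum_sub_distrib]
      refine Finset.sum_congr rfl fun i _ => ?_
      simp only [add_zero, sub_self, zpow_zero, mul_one]
      ring
    · obtain ⟨n, hn, rfl⟩ : ∃ n : ℕ, 1 ≤ n ∧ l = (n : ℤ) :=
        ⟨l.natAbs, by omega, by omega⟩
      have hτ : n ≤ τbar := by omega
      have hne : ((n : ℤ) : ℤ) ≠ 0 := by omega
      rw [if_neg hne, hrl n hn hτ]
      have hrange : τbar + 1 - ((n : ℤ)).natAbs = τbar - n + 1 := by omega
      have ht : ((n : ℤ)).toNat = n := by omega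
      have ht2 : (-((n : ℤ))).toNat = 0 := by omega
      rw [hrange, ht, ht2]
      simp only [hF]
      push_cast
      rw [neg_mul, zero_sub, neg_inj, Finset.sum_mul]
      refine Finset.sum_congr rfl fun i _ => ?_
      have he : ((i : ℤ) + n - ((i : ℤ) + 0)) = (n : ℤ) := by ring
      rw [he]
      push_cast
      ring
  -- LHS = A - ∑∑ F
  have hLHS : ∑ l ∈ Finset.Icc (-(τbar : ℤ)) (τbar : ℤ), (r l : ℂ) * z ^ (-l)
      = A - ∑ i₁ ∈ Finset.range (τbar + 1), ∑ i₂ ∈ Finset.range (τbar + 1), F i₁ i₂ := by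
    rw [hneg, Finset.sum_congr rfl hterm, Finset.sum_sub_distrib, key,
      Finset.sum_ite_eq' _ (0 : ℤ) (fun _ => A), if_pos (by simp : (0:ℤ) ∈ Finset.Icc (-(τbar:ℤ)) (τbar:ℤ))]
  -- expand RHS summand
  have expand : ∀ i₁ i₂ : ℕ,
      ((α i₁ : ℂ) * z ^ (i₁ : ℤ) - (α i₂ : ℂ) * z ^ (i₂ : ℤ)) *
        ((α i₁ : ℂ) * z ^ (-(i₁ : ℤ)) - (α i₂ : ℂ) * z ^ (-(i₂ : ℤ))) *
        (p i₁ : ℂ) * (p i₂ : ℂ)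
      = (((α i₁ ^ 2 * p i₁ * p i₂ : ℝ) : ℂ) + ((α i₂ ^ 2 * p i₁ * p i₂ : ℝ) : ℂ))
        - F i₁ i₂ - F i₂ i₁ := by
    intro i₁ i₂
    simp only [hF]
    push_cast
    have h1 := zpow_ne_zero (i₁ : ℤ) hz
    have h2 := zpow_ne_zero (i₂ : ℤ) hz
    rw [zpow_sub₀ hz, zpow_sub₀ hz, zpow_neg, zpow_neg]
    field_simp
    ring
  have hp1 : (∑ i ∈ Finset.range (τbar + 1), ((p i : ℝ) : ℂ)) = 1 := by
    rw [← Complex.ofReal_sum, hpsum, Complex.ofReal_one]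
  have hsum1 : ∑ i₁ ∈ Finset.range (τbar + 1), ∑ i₂ ∈ Finset.range (τbar + 1),
      ((α i₁ ^ 2 * p i₁ * p i₂ : ℝ) : ℂ) = A := by
    have : ∀ i₁ ∈ Finset.range (τbar + 1), ∑ i₂ ∈ Finset.range (τbar + 1),
        ((α i₁ ^ 2 * p i₁ * p i₂ : ℝ) : ℂ)
        = ((α i₁ ^ 2 * p i₁ : ℝ) : ℂ) * ∑ i₂ ∈ Finset.range (τbar + 1), ((p i₂ : ℝ) : ℂ) := by
      intro i₁ _
      rw [Finset.mul_sum]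
      refine Finset.sum_congr rfl fun i₂ _ => ?_
      push_cast; ring
    rw [Finset.sum_congr rfl this, hA]
    simp only [hp1, mul_one]
    push_cast
    rfl
  have hsum2 : ∑ i₁ ∈ Finset.range (τbar + 1), ∑ i₂ ∈ Finset.range (τbar + 1),
      ((α i₂ ^ 2 * p i₁ * p i₂ : ℝ) : ℂ) = A := by
    rw [Finset.sum_comm]
    rw [← hsum1]
    refine Finset.sum_congr rfl fun i₁ _ => Finset.sum_congr rfl fun i₂ _ => ?_
    push_cast; ring
  have hcomm : ∑ i₁ ∈ Finset.range (τbar + 1), ∑ i₂ ∈ Finset.range (τbar + 1), F i₂ i₁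
      = ∑ i₁ ∈ Finset.range (τbar + 1), ∑ i₂ ∈ Finset.range (τbar + 1), F i₁ i₂ :=
    Finset.sum_comm
  rw [hLHS,
    Finset.sum_congr rfl fun i₁ _ => Finset.sum_congr rfl fun i₂ _ => expand i₁ i₂]
  simp only [Finset.sum_sub_distrib, Finset.sum_add_distrib]
  rw [hsum1, hsum2, hcomm]
  ring
end

section
/- Let {τ_n} be i.i.d. with values in {0,…,τ̄} and P(τ_n = i) = p_i, let ω(k,n) = α_{k−n}(𝟙{τ_n = k−n} − p_{k−n}) for n ≤ k ≤ n+τ̄ and 0 otherwise, and let {u(k)}_{k≥0} be square-integrable random variables such that for each n, τ_n is independent of the σ-algebra generated by {u(m) : 0 ≤ m ≤ n} ∪ {τ_m : 0 ≤ m < n}. Define d_i(k) := ω(k, k−i)·u(k−i). Then for all i₁ ≠ i₂ with i₁, i₂ ∈ {0,…,τ̄} and all k₁ ≥ i₁, k₂ ≥ i₂: E[d_{i₁}(k₁)·d_{i₂}(k₂)] = −δ(k₁−i₁−k₂+i₂)·α_{i₁}·α_{i₂}·p_{i₁}·p_{i₂}·E[u(k₁−i₁)²], where δ is the Kronecker delta.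 -/
open MeasureTheory ProbabilityTheory

lemma key6 {Ωs : Type*} [mΩ : MeasurableSpace Ωs] (μ : Measure Ωs) [IsProbabilityMeasure μ]
    (τ : ℤ → Ωs → ℕ) (u : ℕ → Ωs → ℝ)
    (hmeas : ∀ n, Measurable (τ n)) (humeas : ∀ k, Measurable (u k))
    (hindep : ∀ n : ℕ, Indep (MeasurableSpace.comap (τ (n : ℤ)) inferInstance)
      ((⨆ m ≤ n, MeasurableSpace.comap (u m) inferInstance) ⊔
       (⨆ m < n, MeasurableSpace.comap (τ (m : ℤ)) inferInstance)) μ)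
    (n : ℕ) (φ : ℕ → ℝ) (g : Ωs → ℝ)
    (hg : Measurable[(⨆ m ≤ n, MeasurableSpace.comap (u m) inferInstance) ⊔
       (⨆ m < n, MeasurableSpace.comap (τ (m : ℤ)) inferInstance)] g) :
    ∫ x, φ (τ (n : ℤ) x) * g x ∂μ = (∫ x, φ (τ (n : ℤ) x) ∂μ) * ∫ x, g x ∂μ := by
  have hMle : ((⨆ m ≤ n, MeasurableSpace.comap (u m) inferInstance) ⊔
       (⨆ m < n, MeasurableSpace.comap (τ (m : ℤ)) inferInstance)) ≤ mΩ := by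
    apply sup_le
    · exact iSup₂_le fun m _ => (humeas m).comap_le
    · exact iSup₂_le fun m _ => (hmeas m).comap_le
  have hfm : Measurable (fun x => φ (τ (n : ℤ) x)) :=
    measurable_from_top.comp (hmeas ((n : ℤ)))
  have hgm : Measurable g := hg.mono hMle le_rfl
  have hfind : Measurable[MeasurableSpace.comap (τ (n : ℤ)) inferInstance]
      (fun x => φ (τ (n : ℤ) x)) :=
    measurable_from_top.comp (Measurable.of_comap_le le_rfl)
  have hIndep : IndepFun (fun x => φ (τ (n : ℤ) x)) g μ := by
    rw [IndepFun_iff_Indep]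
    exact indep_of_indep_of_le_right
      (indep_of_indep_of_le_left (hindep n) hfind.comap_le) hg.comap_le
  have := hIndep.integral_mul_eq_mul_integral hfm.aestronglyMeasurable hgm.aestronglyMeasurable
  simpa [Pi.mul_apply] using this

open MeasureTheory ProbabilityTheory

lemma ind6_int {Ωs : Type*} [mΩ : MeasurableSpace Ωs] (μ : Measure Ωs) [IsProbabilityMeasure μ]
    (τ : ℤ → Ωs → ℕ) (hmeas : ∀ n, Measurable (τ n)) (n : ℤ) (i : ℕ) :
    Integrable (fun x => if τ n x = i then (1:ℝ) else 0) μ := by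
  have hs : MeasurableSet {x | τ n x = i} := (hmeas n) (measurableSet_singleton i)
  have : (fun x => if τ n x = i then (1:ℝ) else 0)
      = Set.indicator {x | τ n x = i} (fun _ => (1:ℝ)) := by
    funext x; simp [Set.indicator_apply, Set.mem_setOf_eq]
  rw [this]
  exact (integrable_const (1:ℝ)).indicator hs

lemma ind6_eq {Ωs : Type*} [mΩ : MeasurableSpace Ωs] (μ : Measure Ωs) [IsProbabilityMeasure μ]
    (p : ℕ → ℝ) (hp : ∀ i, 0 ≤ p i)
    (τ : ℤ → Ωs → ℕ) (hmeas : ∀ n, Measurable (τ n))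
    (hdist : ∀ n i, μ {x | τ n x = i} = ENNReal.ofReal (p i)) (n : ℤ) (i : ℕ) :
    ∫ x, (if τ n x = i then (1:ℝ) else 0) ∂μ = p i := by
  have hs : MeasurableSet {x | τ n x = i} := (hmeas n) (measurableSet_singleton i)
  have h1 : (fun x => if τ n x = i then (1:ℝ) else 0)
      = Set.indicator {x | τ n x = i} (fun _ => (1:ℝ)) := by
    funext x; simp [Set.indicator_apply, Set.mem_setOf_eq]
  rw [h1, integral_indicator_const _ hs, measureReal_def, hdist n i, smul_eq_mul, mul_one,
    ENNReal.toReal_ofReal (hp i)]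

open MeasureTheory ProbabilityTheory

lemma zero6 {Ωs : Type*} [mΩ : MeasurableSpace Ωs] (μ : Measure Ωs) [IsProbabilityMeasure μ]
    (p : ℕ → ℝ) (hp : ∀ i, 0 ≤ p i)
    (τ : ℤ → Ωs → ℕ) (u : ℕ → Ωs → ℝ)
    (hmeas : ∀ n, Measurable (τ n)) (humeas : ∀ k, Measurable (u k))
    (hdist : ∀ n i, μ {x | τ n x = i} = ENNReal.ofReal (p i))
    (hindep : ∀ n : ℕ, Indep (MeasurableSpace.comap (τ (n : ℤ)) inferInstance)
      ((⨆ m ≤ n, MeasurableSpace.comap (u m) inferInstance) ⊔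
       (⨆ m < n, MeasurableSpace.comap (τ (m : ℤ)) inferInstance)) μ)
    (n m : ℕ) (hmn : m < n) (i j a b : ℕ) (ha : a ≤ n) (hb : b ≤ n) :
    ∫ x, ((if τ (n:ℤ) x = i then (1:ℝ) else 0) - p i) *
        (((if τ (m:ℤ) x = j then (1:ℝ) else 0) - p j) * (u a x * u b x)) ∂μ = 0 := by
  have hcu : ∀ c : ℕ, c ≤ n →
      Measurable[(⨆ m ≤ n, MeasurableSpace.comap (u m) inferInstance) ⊔
       (⨆ m < n, MeasurableSpace.comap (τ (m : ℤ)) inferInstance)] (u c) := fun c hc =>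
    Measurable.of_comap_le (le_trans
      (le_iSup₂ (f := fun (m : ℕ) (_ : m ≤ n) => MeasurableSpace.comap (u m) inferInstance) c hc)
      le_sup_left)
  have hτM : Measurable[(⨆ m ≤ n, MeasurableSpace.comap (u m) inferInstance) ⊔
       (⨆ m < n, MeasurableSpace.comap (τ (m : ℤ)) inferInstance)] (τ (m:ℤ)) :=
    Measurable.of_comap_le (le_trans
      (le_iSup₂ (f := fun (m' : ℕ) (_ : m' < n) =>
        MeasurableSpace.comap (τ (m':ℤ)) inferInstance) m hmn) le_sup_right)
  have hg : Measurable[(⨆ m ≤ n, MeasurableSpace.comap (u m) inferInstance) ⊔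
       (⨆ m < n, MeasurableSpace.comap (τ (m : ℤ)) inferInstance)]
      (fun x => ((if τ (m:ℤ) x = j then (1:ℝ) else 0) - p j) * (u a x * u b x)) :=
    ((measurable_from_top (f := fun t : ℕ => if t = j then (1:ℝ) else 0)).comp hτM
      |>.sub measurable_const).mul ((hcu a ha).mul (hcu b hb))
  have hkey := key6 μ τ u hmeas humeas hindep n
    (fun t => (if t = i then (1:ℝ) else 0) - p i)
    (fun x => ((if τ (m:ℤ) x = j then (1:ℝ) else 0) - p j) * (u a x * u b x)) hg
  have hmean : ∫ x, ((if τ (n:ℤ) x = i then (1:ℝ) else 0) - p i) ∂μ = 0 := by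
    rw [integral_sub (ind6_int μ τ hmeas _ _) (integrable_const _),
      ind6_eq μ p hp τ hmeas hdist, integral_const]
    simp
  calc ∫ x, ((if τ (n:ℤ) x = i then (1:ℝ) else 0) - p i) *
        (((if τ (m:ℤ) x = j then (1:ℝ) else 0) - p j) * (u a x * u b x)) ∂μ
      = (∫ x, ((if τ (n:ℤ) x = i then (1:ℝ) else 0) - p i) ∂μ) *
        ∫ x, ((if τ (m:ℤ) x = j then (1:ℝ) else 0) - p j) * (u a x * u b x) ∂μ := hkey
    _ = 0 := by rw [hmean, zero_mul]
/-- For i.i.d. delays `τ` with PMF `p`, channel uncertainty `ω`, and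
square-integrable channel inputs `u k` (k ≥ 0) such that `τ n` is independent of the
σ-algebra generated by `{u m : m ≤ n} ∪ {τ m : m < n}`, the components
`d_i k = ω(k, k-i) ⬝ u (k-i)` satisfy
`E[d_{i₁} k₁ ⬝ d_{i₂} k₂] = -δ(k₁-i₁-k₂+i₂) ⬝ α i₁ ⬝ α i₂ ⬝ p i₁ ⬝ p i₂ ⬝ E[u (k₁-i₁)²]`
for `i₁ ≠ i₂`. -/
theorem stmt6
    {Ωs : Type*} [MeasurableSpace Ωs] (μ : Measure Ωs) [IsProbabilityMeasure μ]
    (τbar : ℕ) (p α : ℕ → ℝ)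
    (hp : ∀ i, 0 ≤ p i) (hpsum : ∑ i ∈ Finset.range (τbar + 1), p i = 1)
    (τ : ℤ → Ωs → ℕ)
    (hmeas : ∀ n, Measurable (τ n))
    (hrange : ∀ n x, τ n x ≤ τbar)
    (hiid : iIndepFun τ μ)
    (hdist : ∀ n i, μ {x | τ n x = i} = ENNReal.ofReal (p i))
    (ω : ℤ → ℤ → Ωs → ℝ)
    (hω : ∀ k n x, ω k n x =
      if n ≤ k ∧ k ≤ n + (τbar : ℤ) then
        α (k - n).toNat * ((if (τ n x : ℤ) = k - n then 1 else 0) - p (k - n).toNat)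
      else 0)
    (u : ℕ → Ωs → ℝ)
    (humeas : ∀ k, Measurable (u k))
    (huL2 : ∀ k, MemLp (u k) 2 μ)
    -- `τ n` is independent of the σ-algebra generated by `{u m : 0 ≤ m ≤ n} ∪ {τ m : 0 ≤ m < n}`
    (hindep : ∀ n : ℕ, Indep (MeasurableSpace.comap (τ (n : ℤ)) inferInstance)
      ((⨆ m ≤ n, MeasurableSpace.comap (u m) inferInstance) ⊔
       (⨆ m < n, MeasurableSpace.comap (τ (m : ℤ)) inferInstance)) μ)
    (d : ℕ → ℕ → Ωs → ℝ)
    (hd : ∀ i k : ℕ, i ≤ k → ∀ x, d i k x = ω (k : ℤ) ((k : ℤ) - (i : ℤ)) x * u (k - i) x)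
    (i₁ i₂ : ℕ) (hi₁ : i₁ ≤ τbar) (hi₂ : i₂ ≤ τbar) (hne : i₁ ≠ i₂)
    (k₁ k₂ : ℕ) (hk₁ : i₁ ≤ k₁) (hk₂ : i₂ ≤ k₂) :
    (∫ x, d i₁ k₁ x * d i₂ k₂ x ∂μ) =
      -((if (k₁ : ℤ) - (i₁ : ℤ) - (k₂ : ℤ) + (i₂ : ℤ) = 0 then (1 : ℝ) else 0) *
        α i₁ * α i₂ * p i₁ * p i₂ * ∫ x, u (k₁ - i₁) x ^ 2 ∂μ) := by
  -- one-factor formula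
  have hone : ∀ (i k : ℕ), i ≤ k → i ≤ τbar → ∀ x,
      d i k x = α i * ((if τ ((k - i : ℕ) : ℤ) x = i then (1:ℝ) else 0) - p i) * u (k - i) x := by
    intro i k hik hit x
    have hcast : (k:ℤ) - (i:ℤ) = ((k - i : ℕ) : ℤ) := by omega
    rw [hd i k hik x, hω]
    rw [if_pos (⟨by omega, by omega⟩ : (k:ℤ) - (i:ℤ) ≤ (k:ℤ) ∧ (k:ℤ) ≤ (k:ℤ) - (i:ℤ) + (τbar:ℤ))]
    simp only [show (k:ℤ) - ((k:ℤ) - (i:ℤ)) = (i:ℤ) from by ring]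
    simp only [Int.toNat_natCast, Nat.cast_inj, hcast]
  have hδ : ((k₁:ℤ) - (i₁:ℤ) - (k₂:ℤ) + (i₂:ℤ) = 0) ↔ (k₁ - i₁ = k₂ - i₂) := by omega
  by_cases heq : k₁ - i₁ = k₂ - i₂
  · -- equal time indices
    rw [if_pos (hδ.mpr heq)]
    have hcu : Measurable[(⨆ m ≤ (k₁ - i₁), MeasurableSpace.comap (u m) inferInstance) ⊔
         (⨆ m < (k₁ - i₁), MeasurableSpace.comap (τ (m : ℤ)) inferInstance)] (u (k₁ - i₁)) :=
      Measurable.of_comap_le (le_trans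
        (le_iSup₂ (f := fun (m : ℕ) (_ : m ≤ k₁ - i₁) =>
          MeasurableSpace.comap (u m) inferInstance) (k₁ - i₁) le_rfl) le_sup_left)
    have hkey := key6 μ τ u hmeas humeas hindep (k₁ - i₁)
      (fun t => ((if t = i₁ then (1:ℝ) else 0) - p i₁) * ((if t = i₂ then (1:ℝ) else 0) - p i₂))
      (fun x => u (k₁ - i₁) x * u (k₁ - i₁) x) (hcu.mul hcu)
    have hpt : ∀ x, d i₁ k₁ x * d i₂ k₂ x = (α i₁ * α i₂) *
        ((((if τ ((k₁ - i₁ : ℕ):ℤ) x = i₁ then (1:ℝ) else 0) - p i₁) *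
          ((if τ ((k₁ - i₁ : ℕ):ℤ) x = i₂ then (1:ℝ) else 0) - p i₂)) *
          (u (k₁ - i₁) x * u (k₁ - i₁) x)) := by
      intro x
      rw [hone i₁ k₁ hk₁ hi₁ x, hone i₂ k₂ hk₂ hi₂ x, ← heq]
      ring
    have hmean : ∫ x, ((if τ ((k₁ - i₁ : ℕ):ℤ) x = i₁ then (1:ℝ) else 0) - p i₁) *
        ((if τ ((k₁ - i₁ : ℕ):ℤ) x = i₂ then (1:ℝ) else 0) - p i₂) ∂μ = -(p i₁ * p i₂) := by
      have hpt2 : ∀ x, ((if τ ((k₁ - i₁ : ℕ):ℤ) x = i₁ then (1:ℝ) else 0) - p i₁) *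
          ((if τ ((k₁ - i₁ : ℕ):ℤ) x = i₂ then (1:ℝ) else 0) - p i₂)
          = (p i₁ * p i₂ - p i₂ * (if τ ((k₁ - i₁ : ℕ):ℤ) x = i₁ then (1:ℝ) else 0))
            - p i₁ * (if τ ((k₁ - i₁ : ℕ):ℤ) x = i₂ then (1:ℝ) else 0) := by
        intro x
        by_cases h1 : τ ((k₁ - i₁ : ℕ):ℤ) x = i₁ <;> by_cases h2 : τ ((k₁ - i₁ : ℕ):ℤ) x = i₂
        · exact absurd (h1.symm.trans h2) hne
        all_goals simp [h1, h2, hne, hne.symm]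
        all_goals try ring
      have hint1 := ind6_int μ τ hmeas ((k₁ - i₁ : ℕ):ℤ) i₁
      have hint2 := ind6_int μ τ hmeas ((k₁ - i₁ : ℕ):ℤ) i₂
      have hI1 : Integrable (fun x => p i₁ * p i₂ -
          p i₂ * (if τ ((k₁ - i₁ : ℕ):ℤ) x = i₁ then (1:ℝ) else 0)) μ := by
        exact (integrable_const _).sub (hint1.const_mul _)
      have hI2 : Integrable (fun x =>
          p i₁ * (if τ ((k₁ - i₁ : ℕ):ℤ) x = i₂ then (1:ℝ) else 0)) μ := by
        exact hint2.const_mul _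
      have hI3 : Integrable (fun x =>
          p i₂ * (if τ ((k₁ - i₁ : ℕ):ℤ) x = i₁ then (1:ℝ) else 0)) μ := by
        exact hint1.const_mul _
      rw [integral_congr_ae (Filter.Eventually.of_forall hpt2),
        integral_sub hI1 hI2, integral_sub (integrable_const _) hI3,
        integral_const, integral_const_mul, integral_const_mul,
        ind6_eq μ p hp τ hmeas hdist, ind6_eq μ p hp τ hmeas hdist]
      simp; ring
    have hsq : ∫ x, u (k₁ - i₁) x ^ 2 ∂μ = ∫ x, u (k₁ - i₁) x * u (k₁ - i₁) x ∂μ := by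
      apply integral_congr_ae (Filter.Eventually.of_forall fun x => by ring)
    calc ∫ x, d i₁ k₁ x * d i₂ k₂ x ∂μ
        = (α i₁ * α i₂) * ∫ x,
          ((((if τ ((k₁ - i₁ : ℕ):ℤ) x = i₁ then (1:ℝ) else 0) - p i₁) *
          ((if τ ((k₁ - i₁ : ℕ):ℤ) x = i₂ then (1:ℝ) else 0) - p i₂)) *
          (u (k₁ - i₁) x * u (k₁ - i₁) x)) ∂μ := by
          rw [← integral_const_mul]
          exact integral_congr_ae (Filter.Eventually.of_forall hpt)
      _ = (α i₁ * α i₂) * (-(p i₁ * p i₂) * ∫ x, u (k₁ - i₁) x * u (k₁ - i₁) x ∂μ) := by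
          rw [hkey, hmean]
      _ = -(1 * α i₁ * α i₂ * p i₁ * p i₂ * ∫ x, u (k₁ - i₁) x ^ 2 ∂μ) := by
          rw [hsq]; ring
  · -- distinct time indices
    rw [if_neg (fun h => heq (hδ.mp h))]
    have hrhs : -((0:ℝ) * α i₁ * α i₂ * p i₁ * p i₂ * ∫ x, u (k₁ - i₁) x ^ 2 ∂μ) = 0 := by ring
    rw [hrhs]
    rcases Nat.lt_or_ge (k₁ - i₁) (k₂ - i₂) with h | h
    · have hpt : ∀ x, d i₁ k₁ x * d i₂ k₂ x = (α i₁ * α i₂) *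
          (((if τ ((k₂ - i₂ : ℕ):ℤ) x = i₂ then (1:ℝ) else 0) - p i₂) *
            (((if τ ((k₁ - i₁ : ℕ):ℤ) x = i₁ then (1:ℝ) else 0) - p i₁) *
              (u (k₁ - i₁) x * u (k₂ - i₂) x))) := by
        intro x; rw [hone i₁ k₁ hk₁ hi₁ x, hone i₂ k₂ hk₂ hi₂ x]; ring
      rw [integral_congr_ae (Filter.Eventually.of_forall hpt), integral_const_mul,
        zero6 μ p hp τ u hmeas humeas hdist hindep (k₂ - i₂) (k₁ - i₁) h i₂ i₁ _ _
          (le_of_lt h) le_rfl, mul_zero]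
    · have h' : k₂ - i₂ < k₁ - i₁ := lt_of_le_of_ne h (fun hh => heq hh.symm)
      have hpt : ∀ x, d i₁ k₁ x * d i₂ k₂ x = (α i₁ * α i₂) *
          (((if τ ((k₁ - i₁ : ℕ):ℤ) x = i₁ then (1:ℝ) else 0) - p i₁) *
            (((if τ ((k₂ - i₂ : ℕ):ℤ) x = i₂ then (1:ℝ) else 0) - p i₂) *
              (u (k₁ - i₁) x * u (k₂ - i₂) x))) := by
        intro x; rw [hone i₁ k₁ hk₁ hi₁ x, hone i₂ k₂ hk₂ hi₂ x]; ring
      rw [integral_congr_ae (Filter.Eventually.of_forall hpt), integral_const_mul,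
        zero6 μ p hp τ u hmeas humeas hdist hindep (k₁ - i₁) (k₂ - i₂) h' i₁ i₂ _ _
          le_rfl (le_of_lt h'), mul_zero]
end

section
/- Let {τ_n} be i.i.d. with values in {0,…,τ̄} and P(τ_n = i) = p_i, let ω(k,n) = α_{k−n}(𝟙{τ_n = k−n} − p_{k−n}) for n ≤ k ≤ n+τ̄ and 0 otherwise, and let {u(k)} be square-integrable random variables with u(m) = 0 for m < 0, such that for each n, τ_n is independent of the σ-algebra generated by {u(m) : m ≤ n} ∪ {τ_m : m < n}. Define d(k) := Σ_{i=0}^{τ̄} ω(k, k−i)·u(k−i). Then for every k ≥ 0 the variance of the channel uncertainty output satisfies E[d(k)²] = Σ_{i=0}^{τ̄} α_i² · p_i · (1−p_i) · E[u(k−i)²]. -/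
open MeasureTheory ProbabilityTheory
open scoped ENNReal

/-- For i.i.d. delays `τ`, channel uncertainty `ω`, and square-integrable
channel inputs `u` (with `u m = 0` for `m < 0`) such that `τ n` is independent of the
σ-algebra generated by `{u m : m ≤ n} ∪ {τ m : m < n}`, the channel uncertainty output
`d k = Σ_{i=0}^{τbar} ω(k, k-i) ⬝ u (k-i)` satisfies, for every `k ≥ 0`,
`E[d k ^ 2] = Σ_{i=0}^{τbar} α i ^ 2 ⬝ p i ⬝ (1 - p i) ⬝ E[u (k-i) ^ 2]`. -/
theorem stmt7
    {Ωs : Type*} [MeasurableSpace Ωs] (μ : Measure Ωs) [IsProbabilityMeasure μ]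
    (τbar : ℕ) (p α : ℕ → ℝ)
    (hp : ∀ i, 0 ≤ p i) (hpsum : ∑ i ∈ Finset.range (τbar + 1), p i = 1)
    (τ : ℤ → Ωs → ℕ)
    (hmeas : ∀ n, Measurable (τ n))
    (hrange : ∀ n x, τ n x ≤ τbar)
    (hiid : iIndepFun τ μ)
    (hdist : ∀ n i, μ {x | τ n x = i} = ENNReal.ofReal (p i))
    (ω : ℤ → ℤ → Ωs → ℝ)
    (hω : ∀ k n x, ω k n x =
      if n ≤ k ∧ k ≤ n + (τbar : ℤ) then
        α (k - n).toNat * ((if (τ n x : ℤ) = k - n then 1 else 0) - p (k - n).toNat)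
      else 0)
    (u : ℤ → Ωs → ℝ)
    (humeas : ∀ m, Measurable (u m))
    (huL2 : ∀ m, MemLp (u m) 2 μ)
    (hu0 : ∀ m : ℤ, m < 0 → u m = 0)
    -- `τ n` is independent of the σ-algebra generated by `{u m : m ≤ n} ∪ {τ m : m < n}`
    (hindep : ∀ n : ℤ, Indep (MeasurableSpace.comap (τ n) inferInstance)
      ((⨆ m ≤ n, MeasurableSpace.comap (u m) inferInstance) ⊔
       (⨆ m < n, MeasurableSpace.comap (τ m) inferInstance)) μ)
    (d : ℤ → Ωs → ℝ)
    (hd : ∀ (k : ℤ) x, d k x =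
      ∑ i ∈ Finset.range (τbar + 1), ω k (k - (i : ℤ)) x * u (k - (i : ℤ)) x)
    (k : ℤ) (hk : 0 ≤ k) :
    (∫ x, d k x ^ 2 ∂μ) =
      ∑ i ∈ Finset.range (τbar + 1),
        α i ^ 2 * p i * (1 - p i) * ∫ x, u (k - (i : ℤ)) x ^ 2 ∂μ := by
  classical
  -- `g i t` is the value of `ω k (k - i)` when `τ (k - i) = t`
  set g : ℕ → ℕ → ℝ := fun i t => α i * ((if t = i then 1 else 0) - p i) with hgdef
  have hgmeas : ∀ i, Measurable (g i) := fun i => measurable_from_top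
  have hgb : ∀ i t, ‖g i t‖ ≤ |α i| * (1 + |p i|) := by
    intro i t
    rw [Real.norm_eq_abs, hgdef, abs_mul]
    refine mul_le_mul_of_nonneg_left ?_ (abs_nonneg _)
    calc |(if t = i then (1:ℝ) else 0) - p i|
        ≤ |(if t = i then (1:ℝ) else 0)| + |p i| := abs_sub _ _
      _ ≤ 1 + |p i| := by split_ifs <;> simp
  set F : ℕ → Ωs → ℝ := fun i x => g i (τ (k - (i : ℤ)) x) * u (k - (i : ℤ)) x with hFdef
  have hωeq : ∀ i ∈ Finset.range (τbar + 1), ∀ x,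
      ω k (k - (i : ℤ)) x = g i (τ (k - (i : ℤ)) x) := by
    intro i hi x
    have hi' : i ≤ τbar := Nat.lt_succ_iff.mp (Finset.mem_range.mp hi)
    have hi'' : (i : ℤ) ≤ (τbar : ℤ) := by exact_mod_cast hi'
    rw [hω, if_pos ⟨by omega, by omega⟩]
    have h1 : k - (k - (i : ℤ)) = (i : ℤ) := by ring
    rw [h1]
    simp [hgdef]
  -- integrability of products of two `u`'s
  have huu : ∀ m m' : ℤ, Integrable (fun x => u m x * u m' x) μ := by
    intro m m'
    have h21 : (1:ℝ≥0∞)/1 = 1/2 + 1/2 := by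
      rw [ENNReal.div_add_div_same, one_add_one_eq_two,
        ENNReal.div_self two_ne_zero ENNReal.ofNat_ne_top, div_one]
    have := memLp_one_iff_integrable.1 ((huL2 m).smul (r := 1) (huL2 m'))
    have e : u m' • u m = fun x => u m x * u m' x := by
      funext x; simp [Pi.smul_apply', smul_eq_mul, mul_comm]
    rwa [e] at this
  -- integrability of `F i * F j`
  have hFF : ∀ i j : ℕ, Integrable (fun x => F i x * F j x) μ := by
    intro i j
    have e : (fun x => F i x * F j x) = fun x =>
        (g i (τ (k - (i : ℤ)) x) * g j (τ (k - (j : ℤ)) x)) *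
          (u (k - (i : ℤ)) x * u (k - (j : ℤ)) x) := by
      funext x; simp only [hFdef]; ring
    rw [e]
    refine (huu _ _).bdd_mul
      (((hgmeas i).comp (hmeas _)).mul ((hgmeas j).comp (hmeas _))).aestronglyMeasurable
      (c := (|α i| * (1 + |p i|)) * (|α j| * (1 + |p j|))) (Filter.Eventually.of_forall fun x => ?_)
    rw [norm_mul]
    exact mul_le_mul (hgb i _) (hgb j _) (norm_nonneg _)
      (mul_nonneg (abs_nonneg _) (by positivity))
  -- measurability w.r.t. the big σ-algebra
  set M : ℤ → MeasurableSpace Ωs := fun n =>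
    (⨆ m ≤ n, MeasurableSpace.comap (u m) inferInstance) ⊔
      (⨆ m < n, MeasurableSpace.comap (τ m) inferInstance) with hMdef
  have humM : ∀ n m : ℤ, m ≤ n → Measurable[M n] (u m) := by
    intro n m hm
    have h0 : Measurable[MeasurableSpace.comap (u m) inferInstance] (u m) :=
      measurable_iff_comap_le.2 le_rfl
    exact h0.mono (le_trans
      (le_iSup₂ (f := fun m (_ : m ≤ n) => MeasurableSpace.comap (u m) inferInstance) m hm)
      le_sup_left) le_rfl
  have hτM : ∀ n m : ℤ, m < n → Measurable[M n] (τ m) := by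
    intro n m hm
    have h0 : Measurable[MeasurableSpace.comap (τ m) inferInstance] (τ m) :=
      measurable_iff_comap_le.2 le_rfl
    exact h0.mono (le_trans
      (le_iSup₂ (f := fun m (_ : m < n) => MeasurableSpace.comap (τ m) inferInstance) m hm)
      le_sup_right) le_rfl
  -- independence of a function of `τ n` from an `M n`-measurable function
  have hIF : ∀ (n : ℤ) (X Y : Ωs → ℝ),
      Measurable[MeasurableSpace.comap (τ n) inferInstance] X →
      Measurable[M n] Y → IndepFun X Y μ := by
    intro n X Y hX hY
    exact indep_of_indep_of_le_right (indep_of_indep_of_le_left (hindep n)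
      (measurable_iff_comap_le.1 hX)) (measurable_iff_comap_le.1 hY)
  -- integrability of bounded measurable functions
  have hbint : ∀ (X : Ωs → ℝ), Measurable X → (∃ C, ∀ x, ‖X x‖ ≤ C) → Integrable X μ := by
    intro X hX hC
    have h1 : Integrable (fun _ : Ωs => (1:ℝ)) μ := integrable_const 1
    have := h1.bdd_mul hX.aestronglyMeasurable (Filter.Eventually.of_forall hC.choose_spec)
    simpa using this
  -- the mean of `g i ∘ τ n` is zero
  have hmean : ∀ (n : ℤ) (i : ℕ), (∫ x, g i (τ n x) ∂μ) = 0 := by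
    intro n i
    have hs : MeasurableSet {x | τ n x = i} := hmeas n (measurableSet_singleton i)
    have hXeq : (fun x => g i (τ n x)) = fun x =>
        α i * ({x | τ n x = i}.indicator (fun _ => (1:ℝ)) x - p i) := by
      funext x
      by_cases h : τ n x = i <;> simp [hgdef, Set.indicator_apply, h]
    rw [hXeq, integral_const_mul, integral_sub ((integrable_const (1:ℝ)).indicator hs)
      (integrable_const _), integral_indicator_const _ hs, integral_const]
    simp [measureReal_def, hdist n i, ENNReal.toReal_ofReal (hp i)]
  -- cross terms vanish
  have hzero : ∀ i j : ℕ, i < j → (∫ x, F i x * F j x ∂μ) = 0 := by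
    intro i j hij
    set n : ℤ := k - (i : ℤ) with hn
    set m : ℤ := k - (j : ℤ) with hm
    have hmn : m < n := by
      have : (i : ℤ) < (j : ℤ) := by exact_mod_cast hij
      omega
    set X : Ωs → ℝ := fun x => g i (τ n x) with hX
    set Y : Ωs → ℝ := fun x => u n x * (g j (τ m x) * u m x) with hY
    have hXm : Measurable[MeasurableSpace.comap (τ n) inferInstance] X :=
      (hgmeas i).comp (measurable_iff_comap_le.2 le_rfl)
    have hYm : Measurable[M n] Y :=
      (humM n n le_rfl).mul (((hgmeas j).comp (hτM n m hmn)).mul (humM n m hmn.le))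
    have hXint : Integrable X μ :=
      hbint X ((hgmeas i).comp (hmeas n)) ⟨_, fun x => hgb i (τ n x)⟩
    have hYint : Integrable Y μ := by
      have e : Y = fun x => (g j (τ m x)) * (u n x * u m x) := by
        funext x; simp only [hY]; ring
      rw [e]
      exact (huu n m).bdd_mul ((hgmeas j).comp (hmeas m)).aestronglyMeasurable
        (Filter.Eventually.of_forall fun x => hgb j (τ m x))
    have h1 : (∫ x, F i x * F j x ∂μ) = ∫ x, X x * Y x ∂μ := by
      congr 1; funext x
      simp only [hFdef, hX, hY, ← hn, ← hm]; ring
    have h2 : (∫ x, X x * Y x ∂μ) = (∫ x, X x ∂μ) * ∫ x, Y x ∂μ :=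
      IndepFun.integral_mul_eq_mul_integral (hIF n X Y hXm hYm) hXint.aestronglyMeasurable hYint.aestronglyMeasurable
    rw [h1, h2, hmean n i, zero_mul]
  -- diagonal terms
  have hdiag : ∀ i : ℕ, (∫ x, F i x * F i x ∂μ) =
      α i ^ 2 * p i * (1 - p i) * ∫ x, u (k - (i : ℤ)) x ^ 2 ∂μ := by
    intro i
    set n : ℤ := k - (i : ℤ) with hn
    set X : Ωs → ℝ := fun x => g i (τ n x) * g i (τ n x) with hX
    set Y : Ωs → ℝ := fun x => u n x * u n x with hY
    have h0 : Measurable[MeasurableSpace.comap (τ n) inferInstance] (τ n) :=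
      measurable_iff_comap_le.2 le_rfl
    have hXm : Measurable[MeasurableSpace.comap (τ n) inferInstance] X :=
      ((hgmeas i).comp h0).mul ((hgmeas i).comp h0)
    have hYm : Measurable[M n] Y := (humM n n le_rfl).mul (humM n n le_rfl)
    have hXint : Integrable X μ := by
      refine hbint X (((hgmeas i).comp (hmeas n)).mul ((hgmeas i).comp (hmeas n)))
        ⟨(|α i| * (1 + |p i|)) * (|α i| * (1 + |p i|)), fun x => ?_⟩
      rw [hX, norm_mul]
      exact mul_le_mul (hgb i _) (hgb i _) (norm_nonneg _)
        (mul_nonneg (abs_nonneg _) (by positivity))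
    have hYint : Integrable Y μ := huu n n
    have h1 : (∫ x, F i x * F i x ∂μ) = ∫ x, X x * Y x ∂μ := by
      congr 1; funext x
      simp only [hFdef, hX, hY, ← hn]; ring
    -- compute ∫ X
    have hs : MeasurableSet {x | τ n x = i} := hmeas n (measurableSet_singleton i)
    have hXeq : X = fun x =>
        α i ^ 2 * ((1 - 2 * p i) * ({x | τ n x = i}.indicator (fun _ => (1:ℝ)) x) + p i * p i) := by
      funext x
      by_cases h : τ n x = i <;> simp [hX, hgdef, Set.indicator_apply, h] <;> ring
    have hEX : (∫ x, X x ∂μ) = α i ^ 2 * (p i * (1 - p i)) := by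
      rw [hXeq, integral_const_mul, integral_add
        (((integrable_const (1:ℝ)).indicator hs).const_mul _) (integrable_const _),
        integral_const_mul, integral_indicator_const _ hs, integral_const]
      simp only [measureReal_def, hdist n i, ENNReal.toReal_ofReal (hp i), measure_univ, ENNReal.toReal_one,
        smul_eq_mul, one_mul, mul_one]
      ring
    have hEY : (∫ x, Y x ∂μ) = ∫ x, u n x ^ 2 ∂μ := by
      congr 1; funext x; simp only [hY]; ring
    have h2 : (∫ x, X x * Y x ∂μ) = (∫ x, X x ∂μ) * ∫ x, Y x ∂μ :=
      IndepFun.integral_mul_eq_mul_integral (hIF n X Y hXm hYm) hXint.aestronglyMeasurable hYint.aestronglyMeasurable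
    rw [h1, h2, hEX, hEY]
    ring
  -- expand the square of the sum
  have key : (fun x => d k x ^ 2) = fun x =>
      ∑ i ∈ Finset.range (τbar + 1), ∑ j ∈ Finset.range (τbar + 1), F i x * F j x := by
    funext x
    have hdF : d k x = ∑ i ∈ Finset.range (τbar + 1), F i x := by
      rw [hd k x]
      exact Finset.sum_congr rfl fun i hi => by rw [hωeq i hi x]
    rw [hdF, pow_two, Finset.sum_mul_sum]
  calc (∫ x, d k x ^ 2 ∂μ)
      = ∫ x, ∑ i ∈ Finset.range (τbar + 1), ∑ j ∈ Finset.range (τbar + 1), F i x * F j x ∂μ := by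
        rw [← key]
    _ = ∑ i ∈ Finset.range (τbar + 1), ∑ j ∈ Finset.range (τbar + 1),
          ∫ x, F i x * F j x ∂μ := by
        rw [integral_finset_sum _ fun i _ => integrable_finset_sum _ fun j _ => hFF i j]
        exact Finset.sum_congr rfl fun i _ => integral_finset_sum _ fun j _ => hFF i j
    _ = ∑ i ∈ Finset.range (τbar + 1),
          α i ^ 2 * p i * (1 - p i) * ∫ x, u (k - (i : ℤ)) x ^ 2 ∂μ := by
        refine Finset.sum_congr rfl fun i hi => ?_
        rw [Finset.sum_eq_single_of_mem i hi fun j _ hji => ?_, hdiag i]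
        rcases lt_or_gt_of_ne hji with h | h
        · rw [show (fun x => F i x * F j x) = fun x => F j x * F i x by
            funext x; ring]
          exact hzero j i h
        · exact hzero i j h
end

section
/- Let {τ_n} be i.i.d. with values in {0,…,τ̄} and P(τ_n = i) = p_i, let ω(k,n) = α_{k−n}(𝟙{τ_n = k−n} − p_{k−n}) for n ≤ k ≤ n+τ̄ and 0 otherwise, and let {u(k)} be square-integrable random variables with u(m) = 0 for m < 0, such that for each n, τ_n is independent of the σ-algebra generated by {u(m) : m ≤ n} ∪ {τ_m : m < n}. Define d(k) := Σ_{i=0}^{τ̄} ω(k, k−i)·u(k−i). Then for all k₁ ≠ k₂ ≥ 0: E[d(k₁)·d(k₂)] = −Σ_{i₁=0}^{τ̄} Σ_{i₂=0}^{τ̄} δ(k₁−i₁−k₂+i₂)·α_{i₁}·α_{i₂}·p_{i₁}·p_{i₂}·E[u(k₁−i₁)²]; in particular, E[d(k₁)·d(k₂)] = 0 whenever |k₁ − k₂| > τ̄. -/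
open MeasureTheory ProbabilityTheory

/-- For i.i.d. delays `τ`, channel uncertainty `ω`, and square-integrable
channel inputs `u` (with `u m = 0` for `m < 0`) such that `τ n` is independent of the
σ-algebra generated by `{u m : m ≤ n} ∪ {τ m : m < n}`, the channel uncertainty output
`d k = Σ_{i=0}^{τbar} ω(k, k-i) ⬝ u (k-i)` satisfies, for all `k₁ ≠ k₂ ≥ 0`,
`E[d k₁ ⬝ d k₂] = -Σ_{i₁,i₂} δ(k₁-i₁-k₂+i₂) α i₁ α i₂ p i₁ p i₂ E[u (k₁-i₁)²]`;
in particular `E[d k₁ ⬝ d k₂] = 0` whenever `|k₁ - k₂| > τbar`. -/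
theorem stmt8
    {Ωs : Type*} [MeasurableSpace Ωs] (μ : Measure Ωs) [IsProbabilityMeasure μ]
    (τbar : ℕ) (p α : ℕ → ℝ)
    (hp : ∀ i, 0 ≤ p i) (hpsum : ∑ i ∈ Finset.range (τbar + 1), p i = 1)
    (τ : ℤ → Ωs → ℕ)
    (hmeas : ∀ n, Measurable (τ n))
    (hrange : ∀ n x, τ n x ≤ τbar)
    (hiid : iIndepFun τ μ)
    (hdist : ∀ n i, μ {x | τ n x = i} = ENNReal.ofReal (p i))
    (ω : ℤ → ℤ → Ωs → ℝ)
    (hω : ∀ k n x, ω k n x =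
      if n ≤ k ∧ k ≤ n + (τbar : ℤ) then
        α (k - n).toNat * ((if (τ n x : ℤ) = k - n then 1 else 0) - p (k - n).toNat)
      else 0)
    (u : ℤ → Ωs → ℝ)
    (humeas : ∀ m, Measurable (u m))
    (huL2 : ∀ m, MemLp (u m) 2 μ)
    (hu0 : ∀ m : ℤ, m < 0 → u m = 0)
    -- `τ n` is independent of the σ-algebra generated by `{u m : m ≤ n} ∪ {τ m : m < n}`
    (hindep : ∀ n : ℤ, Indep (MeasurableSpace.comap (τ n) inferInstance)
      ((⨆ m ≤ n, MeasurableSpace.comap (u m) inferInstance) ⊔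
       (⨆ m < n, MeasurableSpace.comap (τ m) inferInstance)) μ)
    (d : ℤ → Ωs → ℝ)
    (hd : ∀ (k : ℤ) x, d k x =
      ∑ i ∈ Finset.range (τbar + 1), ω k (k - (i : ℤ)) x * u (k - (i : ℤ)) x)
    (k₁ k₂ : ℤ) (hk₁ : 0 ≤ k₁) (hk₂ : 0 ≤ k₂) (hne : k₁ ≠ k₂) :
    (∫ x, d k₁ x * d k₂ x ∂μ) =
      -∑ i₁ ∈ Finset.range (τbar + 1), ∑ i₂ ∈ Finset.range (τbar + 1),
        (if k₁ - (i₁ : ℤ) - k₂ + (i₂ : ℤ) = 0 then (1 : ℝ) else 0) *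
          α i₁ * α i₂ * p i₁ * p i₂ * ∫ x, u (k₁ - (i₁ : ℤ)) x ^ 2 ∂μ ∧
    ((τbar : ℤ) < |k₁ - k₂| → (∫ x, d k₁ x * d k₂ x ∂μ) = 0) := by
  classical
  set R := Finset.range (τbar + 1) with hR
  set M : ℤ → MeasurableSpace Ωs := fun n =>
    (⨆ m ≤ n, MeasurableSpace.comap (u m) inferInstance) ⊔
    (⨆ m < n, MeasurableSpace.comap (τ m) inferInstance) with hMdef
  -- product of two L² inputs is integrable
  have huu : ∀ a b : ℤ, Integrable (fun x => u a x * u b x) μ := by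
    intro a b
    have h := (huL2 b).smul (huL2 a) (p := 2) (q := 2) (r := 1)
    rw [memLp_one_iff_integrable] at h
    exact h
  -- bounded functions of τ n
  have hτb : ∀ (n : ℤ) (h : ℕ → ℝ), ∃ C, ∀ x, ‖h (τ n x)‖ ≤ C := by
    intro n h
    refine ⟨∑ i ∈ R, ‖h i‖, fun x => ?_⟩
    exact Finset.single_le_sum (fun i _ => norm_nonneg (h i))
      (Finset.mem_range.2 (Nat.lt_succ_of_le (hrange n x)))
  have hτmeas : ∀ (n : ℤ) (h : ℕ → ℝ), Measurable fun x => h (τ n x) :=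
    fun n h => measurable_from_nat.comp (hmeas n)
  have hτint : ∀ (n : ℤ) (h : ℕ → ℝ), Integrable (fun x => h (τ n x)) μ := by
    intro n h
    obtain ⟨C, hC⟩ := hτb n h
    exact Integrable.mono' (integrable_const C) (hτmeas n h).aestronglyMeasurable
      (Filter.Eventually.of_forall hC)
  -- expectation of a function of τ n
  have hEτ : ∀ (n : ℤ) (h : ℕ → ℝ),
      (∫ x, h (τ n x) ∂μ) = ∑ i ∈ R, h i * p i := by
    intro n h
    have hpt : ∀ x, h (τ n x) = ∑ i ∈ R, (if τ n x = i then h i else 0) := by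
      intro x
      rw [Finset.sum_ite_eq R (τ n x) h]
      simp [hR, Nat.lt_succ_of_le (hrange n x)]
    calc ∫ x, h (τ n x) ∂μ
        = ∫ x, ∑ i ∈ R, (if τ n x = i then h i else 0) ∂μ := by
          exact integral_congr_ae (Filter.Eventually.of_forall hpt)
      _ = ∑ i ∈ R, ∫ x, (if τ n x = i then h i else 0) ∂μ := by
          exact integral_finset_sum R
            (fun i _ => hτint n (fun y : ℕ => if y = i then h i else 0))
      _ = ∑ i ∈ R, h i * p i := by
          refine Finset.sum_congr rfl fun i _ => ?_
          have hs : MeasurableSet {x | τ n x = i} :=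
            (hmeas n) (measurableSet_singleton i)
          have heq : (fun x => if τ n x = i then h i else 0)
              = Set.indicator {x | τ n x = i} (fun _ => h i) := by
            funext x
            by_cases hx : τ n x = i <;> simp [Set.indicator, hx]
          rw [heq, integral_indicator_const (h i) hs, measureReal_def, hdist n i,
            ENNReal.toReal_ofReal (hp i), smul_eq_mul, mul_comm]
  -- key independence identity
  have key : ∀ (n : ℤ) (h : ℕ → ℝ) (f : Ωs → ℝ), Measurable[M n] f → Integrable f μ →
      (∫ x, h (τ n x) * f x ∂μ) = (∫ x, h (τ n x) ∂μ) * ∫ x, f x ∂μ := by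
    intro n h f hfm hfi
    have hle1 : MeasurableSpace.comap (fun x => h (τ n x)) inferInstance
        ≤ MeasurableSpace.comap (τ n) inferInstance := by
      rw [show (fun x => h (τ n x)) = h ∘ τ n from rfl, ← MeasurableSpace.comap_comp]
      exact MeasurableSpace.comap_mono measurable_from_nat.comap_le
    have hIF : IndepFun (fun x => h (τ n x)) f μ := by
      rw [IndepFun_iff_Indep, Indep_iff]
      intro t1 t2 ht1 ht2
      exact (Indep_iff _ _ _).1 (hindep n) t1 t2 (hle1 t1 ht1) (hfm.comap_le t2 ht2)
    simpa [Pi.mul_apply] using hIF.integral_mul_eq_mul_integral (hτint n h).aestronglyMeasurable hfi.aestronglyMeasurable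
  -- measurability of u m and h ∘ τ m with respect to M n
  have huM : ∀ m n : ℤ, m ≤ n → Measurable[M n] (u m) := by
    intro m n hmn
    refine Measurable.of_comap_le (le_trans ?_ le_sup_left)
    exact le_iSup₂ (f := fun m (_ : m ≤ n) => MeasurableSpace.comap (u m) inferInstance) m hmn
  have hτM : ∀ (m n : ℤ), m < n → ∀ (h : ℕ → ℝ), Measurable[M n] (fun x => h (τ m x)) := by
    intro m n hmn h
    refine Measurable.of_comap_le (le_trans ?_ le_sup_right)
    refine le_trans ?_
      (le_iSup₂ (f := fun m (_ : m < n) => MeasurableSpace.comap (τ m) inferInstance) m hmn)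
    rw [show (fun x => h (τ m x)) = h ∘ τ m from rfl, ← MeasurableSpace.comap_comp]
    exact MeasurableSpace.comap_mono measurable_from_nat.comap_le
  -- boundedness and measurability of ω
  have hωbd : ∀ (k n : ℤ), ∃ C, ∀ x, ‖ω k n x‖ ≤ C := by
    intro k n
    refine ⟨|α (k - n).toNat| * (1 + |p (k - n).toNat|), fun x => ?_⟩
    rw [hω]
    split_ifs with hcnd hin
    · rw [Real.norm_eq_abs, abs_mul]
      refine mul_le_mul_of_nonneg_left (le_trans (abs_sub _ _) ?_) (abs_nonneg _)
      norm_num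
    · rw [Real.norm_eq_abs, abs_mul]
      refine mul_le_mul_of_nonneg_left (le_trans (abs_sub _ _) ?_) (abs_nonneg _)
      simp only [abs_zero, zero_add]
      linarith [abs_nonneg (p (k - n).toNat)]
    · rw [norm_zero]
      positivity
  have hωmeas : ∀ k n : ℤ, Measurable (ω k n) := by
    intro k n
    have : ω k n = fun x =>
        if n ≤ k ∧ k ≤ n + (τbar : ℤ) then
          α (k - n).toNat * ((if (τ n x : ℤ) = k - n then 1 else 0) - p (k - n).toNat)
        else 0 := funext (hω k n)
    rw [this]
    by_cases hcnd : n ≤ k ∧ k ≤ n + (τbar : ℤ)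
    · simp only [if_pos hcnd]
      exact (measurable_const.mul
        (((hτmeas n (fun y : ℕ => if (y : ℤ) = k - n then 1 else 0))).sub measurable_const))
    · simp only [if_neg hcnd]
      exact measurable_const
  -- integrability of each term
  have hTint : ∀ i₁ i₂ : ℕ, Integrable (fun x =>
      ω k₁ (k₁ - (i₁ : ℤ)) x * u (k₁ - (i₁ : ℤ)) x *
        (ω k₂ (k₂ - (i₂ : ℤ)) x * u (k₂ - (i₂ : ℤ)) x)) μ := by
    intro i₁ i₂
    have hre : (fun x => ω k₁ (k₁ - (i₁ : ℤ)) x * u (k₁ - (i₁ : ℤ)) x *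
        (ω k₂ (k₂ - (i₂ : ℤ)) x * u (k₂ - (i₂ : ℤ)) x))
        = fun x => (ω k₁ (k₁ - (i₁ : ℤ)) x * ω k₂ (k₂ - (i₂ : ℤ)) x) *
          (u (k₁ - (i₁ : ℤ)) x * u (k₂ - (i₂ : ℤ)) x) := by
      funext x; ring
    rw [hre]
    obtain ⟨C1, h1⟩ := hωbd k₁ (k₁ - (i₁ : ℤ))
    obtain ⟨C2, h2⟩ := hωbd k₂ (k₂ - (i₂ : ℤ))
    refine (huu _ _).bdd_mul (c := C1 * C2) ((hωmeas _ _).mul (hωmeas _ _)).aestronglyMeasurable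
      (Filter.Eventually.of_forall fun x => ?_)
    rw [norm_mul]
    exact mul_le_mul (h1 x) (h2 x) (norm_nonneg _) ((norm_nonneg _).trans (h1 x))
  -- expansion of the product integral
  have hsum : (∫ x, d k₁ x * d k₂ x ∂μ) = ∑ i₁ ∈ R, ∑ i₂ ∈ R,
      ∫ x, ω k₁ (k₁ - (i₁ : ℤ)) x * u (k₁ - (i₁ : ℤ)) x *
        (ω k₂ (k₂ - (i₂ : ℤ)) x * u (k₂ - (i₂ : ℤ)) x) ∂μ := by
    have hpt : ∀ x, d k₁ x * d k₂ x = ∑ i₁ ∈ R, ∑ i₂ ∈ R,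
        ω k₁ (k₁ - (i₁ : ℤ)) x * u (k₁ - (i₁ : ℤ)) x *
          (ω k₂ (k₂ - (i₂ : ℤ)) x * u (k₂ - (i₂ : ℤ)) x) := by
      intro x
      rw [hd, hd, Finset.sum_mul_sum]
    calc (∫ x, d k₁ x * d k₂ x ∂μ)
        = ∫ x, ∑ i₁ ∈ R, ∑ i₂ ∈ R,
            ω k₁ (k₁ - (i₁ : ℤ)) x * u (k₁ - (i₁ : ℤ)) x *
              (ω k₂ (k₂ - (i₂ : ℤ)) x * u (k₂ - (i₂ : ℤ)) x) ∂μ :=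
          integral_congr_ae (Filter.Eventually.of_forall hpt)
      _ = ∑ i₁ ∈ R, ∫ x, ∑ i₂ ∈ R,
            ω k₁ (k₁ - (i₁ : ℤ)) x * u (k₁ - (i₁ : ℤ)) x *
              (ω k₂ (k₂ - (i₂ : ℤ)) x * u (k₂ - (i₂ : ℤ)) x) ∂μ :=
          integral_finset_sum R (fun i₁ _ =>
            integrable_finset_sum R (fun i₂ _ => hTint i₁ i₂))
      _ = ∑ i₁ ∈ R, ∑ i₂ ∈ R,
            ∫ x, ω k₁ (k₁ - (i₁ : ℤ)) x * u (k₁ - (i₁ : ℤ)) x *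
              (ω k₂ (k₂ - (i₂ : ℤ)) x * u (k₂ - (i₂ : ℤ)) x) ∂μ :=
          Finset.sum_congr rfl fun i₁ _ =>
            integral_finset_sum R (fun i₂ _ => hTint i₁ i₂)
  -- rewriting ω at the relevant arguments
  have hωval : ∀ (k : ℤ) (i : ℕ), i ∈ R → ∀ x, ω k (k - (i : ℤ)) x
      = α i * ((if (τ (k - (i : ℤ)) x : ℤ) = (i : ℤ) then 1 else 0) - p i) := by
    intro k i hi x
    have hiτ : i ≤ τbar := Nat.lt_succ_iff.mp (Finset.mem_range.mp hi)
    rw [hω]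
    have hcnd : k - (i : ℤ) ≤ k ∧ k ≤ k - (i : ℤ) + (τbar : ℤ) := by
      constructor <;> omega
    rw [if_pos hcnd]
    have h1 : (k - (k - (i : ℤ))).toNat = i := by omega
    have h2 : k - (k - (i : ℤ)) = (i : ℤ) := by omega
    rw [h1, h2]
  -- zero-mean property of centered indicators
  have hE0 : ∀ (n : ℤ) (j : ℕ), j ∈ R →
      (∫ x, ((if (τ n x : ℤ) = (j : ℤ) then (1:ℝ) else 0) - p j) ∂μ) = 0 := by
    intro n j hj
    rw [hEτ n (fun y : ℕ => (if (y : ℤ) = (j : ℤ) then (1:ℝ) else 0) - p j)]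
    have : ∀ i ∈ R, ((if (i : ℤ) = (j : ℤ) then (1:ℝ) else 0) - p j) * p i
        = (if i = j then p i else 0) - p j * p i := by
      intro i _
      by_cases hij : i = j <;> simp [hij] <;> ring
    rw [Finset.sum_congr rfl this, Finset.sum_sub_distrib,
      Finset.sum_ite_eq' R j (fun i => p i), ← Finset.mul_sum, hpsum, if_pos hj]
    ring
  -- the per-term evaluation
  have hterm : ∀ i₁ ∈ R, ∀ i₂ ∈ R,
      (∫ x, ω k₁ (k₁ - (i₁ : ℤ)) x * u (k₁ - (i₁ : ℤ)) x *
        (ω k₂ (k₂ - (i₂ : ℤ)) x * u (k₂ - (i₂ : ℤ)) x) ∂μ)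
      = -((if k₁ - (i₁ : ℤ) - k₂ + (i₂ : ℤ) = 0 then (1 : ℝ) else 0) *
          α i₁ * α i₂ * p i₁ * p i₂ * ∫ x, u (k₁ - (i₁ : ℤ)) x ^ 2 ∂μ) := by
    intro i₁ hi₁ i₂ hi₂
    set n₁ := k₁ - (i₁ : ℤ) with hn₁
    set n₂ := k₂ - (i₂ : ℤ) with hn₂
    by_cases hc : n₁ = n₂
    · -- diagonal case
      have hδ : k₁ - (i₁ : ℤ) - k₂ + (i₂ : ℤ) = 0 := by omega
      have hi12 : i₁ ≠ i₂ := by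
        intro h; apply hne; omega
      have hpt : ∀ x, ω k₁ n₁ x * u n₁ x * (ω k₂ n₂ x * u n₂ x)
          = α i₁ * α i₂ *
              (((if (τ n₁ x : ℤ) = (i₁ : ℤ) then (1:ℝ) else 0) - p i₁) *
               ((if (τ n₁ x : ℤ) = (i₂ : ℤ) then (1:ℝ) else 0) - p i₂))
            * (u n₁ x * u n₁ x) := by
        intro x
        rw [hωval k₁ i₁ hi₁ x, ← hn₁, hωval k₂ i₂ hi₂ x, ← hn₂, ← hc]
        ring
      have hfm : Measurable[M n₁] (fun x => u n₁ x * u n₁ x) :=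
        (huM n₁ n₁ le_rfl).mul (huM n₁ n₁ le_rfl)
      have hstep := key n₁ (fun y : ℕ => α i₁ * α i₂ *
          (((if (y : ℤ) = (i₁ : ℤ) then (1:ℝ) else 0) - p i₁) *
           ((if (y : ℤ) = (i₂ : ℤ) then (1:ℝ) else 0) - p i₂)))
        (fun x => u n₁ x * u n₁ x) hfm (huu n₁ n₁)
      beta_reduce at hstep
      have hEh := hEτ n₁ (fun y : ℕ => α i₁ * α i₂ *
          (((if (y : ℤ) = (i₁ : ℤ) then (1:ℝ) else 0) - p i₁) *
           ((if (y : ℤ) = (i₂ : ℤ) then (1:ℝ) else 0) - p i₂)))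
      beta_reduce at hEh
      have hEh2 : (∑ i ∈ R, α i₁ * α i₂ *
          (((if (i : ℤ) = (i₁ : ℤ) then (1:ℝ) else 0) - p i₁) *
           ((if (i : ℤ) = (i₂ : ℤ) then (1:ℝ) else 0) - p i₂)) * p i)
          = α i₁ * α i₂ * -(p i₁ * p i₂) := by
        have hcongr : ∀ i ∈ R, α i₁ * α i₂ *
            (((if (i : ℤ) = (i₁ : ℤ) then (1:ℝ) else 0) - p i₁) *
             ((if (i : ℤ) = (i₂ : ℤ) then (1:ℝ) else 0) - p i₂)) * p i
            = α i₁ * α i₂ *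
              ((if i = i₁ then -(p i₂) * p i else 0) +
               ((if i = i₂ then -(p i₁) * p i else 0) + p i₁ * p i₂ * p i)) := by
          intro i _
          by_cases h1 : i = i₁ <;> by_cases h2 : i = i₂
          · exfalso; exact hi12 (h1 ▸ h2)
          all_goals simp [h1, h2, Nat.cast_inj, hi12, hi12.symm]
          all_goals ring
        rw [Finset.sum_congr rfl hcongr, ← Finset.mul_sum,
          Finset.sum_add_distrib, Finset.sum_add_distrib,
          Finset.sum_ite_eq' R i₁ (fun i => -(p i₂) * p i),
          Finset.sum_ite_eq' R i₂ (fun i => -(p i₁) * p i),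
          ← Finset.mul_sum, hpsum, if_pos hi₁, if_pos hi₂]
        ring
      have hsq : (∫ x, u n₁ x * u n₁ x ∂μ) = ∫ x, u (k₁ - (i₁ : ℤ)) x ^ 2 ∂μ := by
        rw [← hn₁]
        exact integral_congr_ae (Filter.Eventually.of_forall fun x => (sq (u n₁ x)).symm)
      calc (∫ x, ω k₁ n₁ x * u n₁ x * (ω k₂ n₂ x * u n₂ x) ∂μ)
          = ∫ x, α i₁ * α i₂ *
              (((if (τ n₁ x : ℤ) = (i₁ : ℤ) then (1:ℝ) else 0) - p i₁) *
               ((if (τ n₁ x : ℤ) = (i₂ : ℤ) then (1:ℝ) else 0) - p i₂))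
              * (u n₁ x * u n₁ x) ∂μ :=
            integral_congr_ae (Filter.Eventually.of_forall hpt)
        _ = (∫ x, α i₁ * α i₂ *
              (((if (τ n₁ x : ℤ) = (i₁ : ℤ) then (1:ℝ) else 0) - p i₁) *
               ((if (τ n₁ x : ℤ) = (i₂ : ℤ) then (1:ℝ) else 0) - p i₂)) ∂μ) *
            ∫ x, u n₁ x * u n₁ x ∂μ := hstep
        _ = (α i₁ * α i₂ * -(p i₁ * p i₂)) * ∫ x, u (k₁ - (i₁ : ℤ)) x ^ 2 ∂μ := by
            rw [hEh, hEh2, hsq]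
        _ = -((if k₁ - (i₁ : ℤ) - k₂ + (i₂ : ℤ) = 0 then (1 : ℝ) else 0) *
              α i₁ * α i₂ * p i₁ * p i₂ * ∫ x, u (k₁ - (i₁ : ℤ)) x ^ 2 ∂μ) := by
            rw [if_pos hδ]; ring
    · -- off-diagonal case: expectation vanishes
      have hδ : ¬ (k₁ - (i₁ : ℤ) - k₂ + (i₂ : ℤ) = 0) := by omega
      have hmain0 : (∫ x, ω k₁ n₁ x * u n₁ x * (ω k₂ n₂ x * u n₂ x) ∂μ) = 0 := by
        rcases lt_or_gt_of_ne hc with hlt | hlt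
        · -- n₁ < n₂ : condition on τ n₂
          have hfm : Measurable[M n₂] (fun x =>
              α i₁ * α i₂ * (((if (τ n₁ x : ℤ) = (i₁ : ℤ) then (1:ℝ) else 0) - p i₁) *
                (u n₁ x * u n₂ x))) := by
            refine Measurable.const_mul ?_ _
            exact (hτM n₁ n₂ hlt (fun y : ℕ => (if (y : ℤ) = (i₁ : ℤ) then (1:ℝ) else 0) - p i₁)).mul
              ((huM n₁ n₂ hlt.le).mul (huM n₂ n₂ le_rfl))
          have hfi : Integrable (fun x =>
              α i₁ * α i₂ * (((if (τ n₁ x : ℤ) = (i₁ : ℤ) then (1:ℝ) else 0) - p i₁) *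
                (u n₁ x * u n₂ x))) μ := by
            refine Integrable.const_mul ?_ _
            exact (huu n₁ n₂).bdd_mul
              (hτmeas n₁ (fun y : ℕ => (if (y : ℤ) = (i₁ : ℤ) then (1:ℝ) else 0) - p i₁)).aestronglyMeasurable
              (Filter.Eventually.of_forall (hτb n₁ (fun y : ℕ => (if (y : ℤ) = (i₁ : ℤ) then (1:ℝ) else 0) - p i₁)).choose_spec)
          have hpt : ∀ x, ω k₁ n₁ x * u n₁ x * (ω k₂ n₂ x * u n₂ x)
              = ((if (τ n₂ x : ℤ) = (i₂ : ℤ) then (1:ℝ) else 0) - p i₂) *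
                (α i₁ * α i₂ * (((if (τ n₁ x : ℤ) = (i₁ : ℤ) then (1:ℝ) else 0) - p i₁) *
                  (u n₁ x * u n₂ x))) := by
            intro x
            rw [hωval k₁ i₁ hi₁ x, ← hn₁, hωval k₂ i₂ hi₂ x, ← hn₂]
            ring
          have hkey := key n₂ (fun y : ℕ => (if (y : ℤ) = (i₂ : ℤ) then (1:ℝ) else 0) - p i₂)
            (fun x => α i₁ * α i₂ * (((if (τ n₁ x : ℤ) = (i₁ : ℤ) then (1:ℝ) else 0) - p i₁) *
              (u n₁ x * u n₂ x))) hfm hfi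
          beta_reduce at hkey
          have hz := hE0 n₂ i₂ hi₂
          rw [integral_congr_ae (Filter.Eventually.of_forall hpt), hkey, hz, zero_mul]
        · -- n₂ < n₁ : condition on τ n₁
          have hfm : Measurable[M n₁] (fun x =>
              α i₁ * α i₂ * (((if (τ n₂ x : ℤ) = (i₂ : ℤ) then (1:ℝ) else 0) - p i₂) *
                (u n₁ x * u n₂ x))) := by
            refine Measurable.const_mul ?_ _
            exact (hτM n₂ n₁ hlt (fun y : ℕ => (if (y : ℤ) = (i₂ : ℤ) then (1:ℝ) else 0) - p i₂)).mul
              ((huM n₁ n₁ le_rfl).mul (huM n₂ n₁ hlt.le))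
          have hfi : Integrable (fun x =>
              α i₁ * α i₂ * (((if (τ n₂ x : ℤ) = (i₂ : ℤ) then (1:ℝ) else 0) - p i₂) *
                (u n₁ x * u n₂ x))) μ := by
            refine Integrable.const_mul ?_ _
            exact (huu n₁ n₂).bdd_mul
              (hτmeas n₂ (fun y : ℕ => (if (y : ℤ) = (i₂ : ℤ) then (1:ℝ) else 0) - p i₂)).aestronglyMeasurable
              (Filter.Eventually.of_forall (hτb n₂ (fun y : ℕ => (if (y : ℤ) = (i₂ : ℤ) then (1:ℝ) else 0) - p i₂)).choose_spec)
          have hpt : ∀ x, ω k₁ n₁ x * u n₁ x * (ω k₂ n₂ x * u n₂ x)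
              = ((if (τ n₁ x : ℤ) = (i₁ : ℤ) then (1:ℝ) else 0) - p i₁) *
                (α i₁ * α i₂ * (((if (τ n₂ x : ℤ) = (i₂ : ℤ) then (1:ℝ) else 0) - p i₂) *
                  (u n₁ x * u n₂ x))) := by
            intro x
            rw [hωval k₁ i₁ hi₁ x, ← hn₁, hωval k₂ i₂ hi₂ x, ← hn₂]
            ring
          have hkey := key n₁ (fun y : ℕ => (if (y : ℤ) = (i₁ : ℤ) then (1:ℝ) else 0) - p i₁)
            (fun x => α i₁ * α i₂ * (((if (τ n₂ x : ℤ) = (i₂ : ℤ) then (1:ℝ) else 0) - p i₂) *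
              (u n₁ x * u n₂ x))) hfm hfi
          beta_reduce at hkey
          have hz := hE0 n₁ i₁ hi₁
          rw [integral_congr_ae (Filter.Eventually.of_forall hpt), hkey, hz, zero_mul]
      rw [hmain0, if_neg hδ]
      ring
  have hmain : (∫ x, d k₁ x * d k₂ x ∂μ) =
      -∑ i₁ ∈ R, ∑ i₂ ∈ R,
        (if k₁ - (i₁ : ℤ) - k₂ + (i₂ : ℤ) = 0 then (1 : ℝ) else 0) *
          α i₁ * α i₂ * p i₁ * p i₂ * ∫ x, u (k₁ - (i₁ : ℤ)) x ^ 2 ∂μ := by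
    rw [hsum, ← Finset.sum_neg_distrib]
    refine Finset.sum_congr rfl fun i₁ hi₁ => ?_
    rw [← Finset.sum_neg_distrib]
    exact Finset.sum_congr rfl fun i₂ hi₂ => hterm i₁ hi₁ i₂ hi₂
  refine ⟨hmain, fun habs => ?_⟩
  rw [hmain]
  have hz : ∀ i₁ ∈ R, ∀ i₂ ∈ R,
      (if k₁ - (i₁ : ℤ) - k₂ + (i₂ : ℤ) = 0 then (1 : ℝ) else 0) *
        α i₁ * α i₂ * p i₁ * p i₂ * ∫ x, u (k₁ - (i₁ : ℤ)) x ^ 2 ∂μ = 0 := by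
    intro i₁ hi₁ i₂ hi₂
    have h1 : (i₁ : ℤ) ≤ τbar := by
      exact_mod_cast Nat.lt_succ_iff.mp (Finset.mem_range.mp hi₁)
    have h2 : (i₂ : ℤ) ≤ τbar := by
      exact_mod_cast Nat.lt_succ_iff.mp (Finset.mem_range.mp hi₂)
    have : ¬ (k₁ - (i₁ : ℤ) - k₂ + (i₂ : ℤ) = 0) := by
      intro h
      rcases abs_cases (k₁ - k₂) with ⟨he, _⟩ | ⟨he, _⟩ <;> omega
    rw [if_neg this]
    ring
  rw [Finset.sum_congr rfl (fun i₁ hi₁ => Finset.sum_congr rfl (fun i₂ hi₂ => hz i₁ hi₁ i₂ hi₂))]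
  simp
end

section
/- Let Ĝ, T̂ : ℕ → ℝ be nonnegative sequences with Ĝ(0) = T̂(0) = 0, Ĝ(1) > 0, and Σ_{n=0}^{∞} Ĝ(n) < ∞. Define Ŝ : ℕ → ℝ by Ŝ(0) = 1 and Ŝ(m) = Σ_{l=1}^{m} T̂(l)·Ŝ(m−l) for m ≥ 1. Then the following are equivalent: (i) for every bounded nonnegative sequence σ_v : ℕ → ℝ, the (unique) sequence σ_u : ℕ → ℝ satisfying σ_u(k) = Σ_{n=0}^{k} Ĝ(n)·σ_v(k−n) + Σ_{n=1}^{k} T̂(n)·σ_u(k−n) for all k ≥ 0 is bounded; (ii) sup_{k≥0} Σ_{i=0}^{k} Ŝ(i) < ∞ (equivalently, Σ_{i=0}^{∞} Ŝ(i) converges). -/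
lemma conv_rec (T S : ℕ → ℝ) (hS0 : S 0 = 1)
    (hS : ∀ m : ℕ, 1 ≤ m → S m = ∑ l ∈ Finset.Icc 1 m, T l * S (m - l))
    (f : ℕ → ℝ) (k : ℕ) :
    (∑ m ∈ Finset.range (k + 1), S m * f (k - m))
      = f k + ∑ n ∈ Finset.Icc 1 k, T n * ∑ j ∈ Finset.range (k - n + 1), S j * f (k - n - j) := by
  rw [Finset.sum_range_succ']
  have h1 : ∑ i ∈ Finset.range k, S (i + 1) * f (k - (i + 1))
      = ∑ m ∈ Finset.Icc 1 k, S m * f (k - m) := by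
    rw [← Finset.Ico_add_one_right_eq_Icc, Finset.sum_Ico_eq_sum_range]
    apply Finset.sum_congr (by simp)
    intro i _
    congr 2 <;> omega
  rw [h1, hS0]
  simp only [Nat.sub_zero, one_mul]
  have h2 : ∑ m ∈ Finset.Icc 1 k, S m * f (k - m)
      = ∑ m ∈ Finset.Ico 1 (k+1), ∑ l ∈ Finset.Ico 1 (m+1), T l * S (m - l) * f (k - m) := by
    rw [← Finset.Ico_add_one_right_eq_Icc]
    apply Finset.sum_congr rfl
    intro m hm
    simp only [Finset.mem_Ico] at hm
    rw [Finset.Ico_add_one_right_eq_Icc, hS m hm.1, Finset.sum_mul]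
  rw [h2, ← Finset.sum_Ico_Ico_comm]
  rw [add_comm]
  congr 1
  rw [← Finset.Ico_add_one_right_eq_Icc]
  apply Finset.sum_congr rfl
  intro l hl
  simp only [Finset.mem_Ico] at hl
  rw [Finset.mul_sum, Finset.sum_Ico_eq_sum_range]
  have : k + 1 - l = k - l + 1 := by omega
  rw [this]
  apply Finset.sum_congr rfl
  intro j hj
  simp only [Finset.mem_range] at hj
  have e1 : l + j - l = j := by omega
  have e2 : k - l - j = k - (l + j) := by omega
  rw [e1, e2]; ring

lemma uniq_rec (T S : ℕ → ℝ) (hS0 : S 0 = 1)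
    (hS : ∀ m : ℕ, 1 ≤ m → S m = ∑ l ∈ Finset.Icc 1 m, T l * S (m - l))
    (f σu : ℕ → ℝ)
    (hrec : ∀ k, σu k = f k + ∑ n ∈ Finset.Icc 1 k, T n * σu (k - n)) :
    ∀ k, σu k = ∑ m ∈ Finset.range (k + 1), S m * f (k - m) := by
  intro k
  induction k using Nat.strong_induction_on with
  | _ k ih =>
    rw [hrec k, conv_rec T S hS0 hS f k]
    congr 1
    apply Finset.sum_congr rfl
    intro n hn
    simp only [Finset.mem_Icc] at hn
    rw [ih (k - n) (by omega)]

lemma S_nonneg (T S : ℕ → ℝ) (hTnonneg : ∀ n, 0 ≤ T n) (hS0 : S 0 = 1)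
    (hS : ∀ m : ℕ, 1 ≤ m → S m = ∑ l ∈ Finset.Icc 1 m, T l * S (m - l)) :
    ∀ m, 0 ≤ S m := by
  intro m
  induction m using Nat.strong_induction_on with
  | _ m ih =>
    rcases Nat.eq_zero_or_pos m with h | h
    · simp [h, hS0]
    · rw [hS m h]
      apply Finset.sum_nonneg
      intro l hl
      simp only [Finset.mem_Icc] at hl
      exact mul_nonneg (hTnonneg l) (ih (m - l) (by omega))

/-- For nonnegative `Ĝ, T̂` with `Ĝ 0 = T̂ 0 = 0`, `Ĝ 1 > 0` and `Ĝ`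
summable, and `Ŝ` defined by `Ŝ 0 = 1`, `Ŝ m = Σ_{l=1}^m T̂ l ⬝ Ŝ (m-l)`, the following are
equivalent: (i) for every bounded nonnegative `σv`, every `σu` satisfying the variance
recursion `σu k = Σ_{n=0}^k Ĝ n ⬝ σv (k-n) + Σ_{n=1}^k T̂ n ⬝ σu (k-n)` is bounded;
(ii) the partial sums `Σ_{i=0}^k Ŝ i` are uniformly bounded. -/
theorem stmt11
    (G T S : ℕ → ℝ)
    (hG0 : G 0 = 0) (hT0 : T 0 = 0)
    (hGnonneg : ∀ n, 0 ≤ G n) (hTnonneg : ∀ n, 0 ≤ T n)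
    (hG1 : 0 < G 1) (hGsum : Summable G)
    (hS0 : S 0 = 1)
    (hS : ∀ m : ℕ, 1 ≤ m → S m = ∑ l ∈ Finset.Icc 1 m, T l * S (m - l)) :
    ((∀ σv : ℕ → ℝ, (∀ k, 0 ≤ σv k) → (∃ C, ∀ k, σv k ≤ C) →
        ∀ σu : ℕ → ℝ,
          (∀ k, σu k = ∑ n ∈ Finset.range (k + 1), G n * σv (k - n)
            + ∑ n ∈ Finset.Icc 1 k, T n * σu (k - n)) →
          ∃ C, ∀ k, |σu k| ≤ C) ↔
      ∃ C, ∀ k, ∑ i ∈ Finset.range (k + 1), S i ≤ C) := by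
  have hSnn := S_nonneg T S hTnonneg hS0 hS
  constructor
  · intro hbdd
    set f : ℕ → ℝ := fun j => ∑ n ∈ Finset.range (j + 1), G n * (1 : ℝ) with hf
    set σu : ℕ → ℝ := fun k => ∑ m ∈ Finset.range (k + 1), S m * f (k - m) with hσu
    have hrec : ∀ k, σu k = ∑ n ∈ Finset.range (k + 1), G n * (fun _ : ℕ => (1:ℝ)) (k - n)
        + ∑ n ∈ Finset.Icc 1 k, T n * σu (k - n) := by
      intro k
      have := conv_rec T S hS0 hS f k
      simpa [hσu, hf] using this
    obtain ⟨C, hC⟩ := hbdd (fun _ => 1) (fun _ => zero_le_one) ⟨1, fun _ => le_refl 1⟩ σu hrec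
    refine ⟨C / G 1, fun k => ?_⟩
    rw [le_div_iff₀ hG1]
    have hfge : ∀ j, 1 ≤ j → G 1 ≤ f j := by
      intro j hj
      have h1 : (1 : ℕ) ∈ Finset.range (j + 1) := by simp; omega
      calc G 1 = G 1 * 1 := (mul_one _).symm
        _ ≤ ∑ n ∈ Finset.range (j + 1), G n * 1 :=
            Finset.single_le_sum (fun n _ => mul_nonneg (hGnonneg n) zero_le_one) h1
    have key : (∑ i ∈ Finset.range (k + 1), S i) * G 1 ≤ σu (k + 1) := by
      have h1 : σu (k + 1) = ∑ m ∈ Finset.range (k + 1), S m * f (k + 1 - m)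
          + S (k + 1) * f (k + 1 - (k + 1)) := Finset.sum_range_succ _ _
      rw [h1]
      have h2 : (∑ i ∈ Finset.range (k + 1), S i) * G 1
          ≤ ∑ m ∈ Finset.range (k + 1), S m * f (k + 1 - m) := by
        rw [Finset.sum_mul]
        apply Finset.sum_le_sum
        intro m hm
        simp only [Finset.mem_range] at hm
        exact mul_le_mul_of_nonneg_left (hfge (k + 1 - m) (by omega)) (hSnn m)
      have h3 : 0 ≤ S (k + 1) * f (k + 1 - (k + 1)) := by
        apply mul_nonneg (hSnn _)
        apply Finset.sum_nonneg
        intro n _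
        exact mul_nonneg (hGnonneg n) zero_le_one
      linarith
    calc (∑ i ∈ Finset.range (k + 1), S i) * G 1 ≤ σu (k + 1) := key
      _ ≤ |σu (k + 1)| := le_abs_self _
      _ ≤ C := hC (k + 1)
  · rintro ⟨C, hC⟩ σv hσvnn ⟨M, hM⟩ σu hrec
    set A := ∑' n, G n with hA
    set f : ℕ → ℝ := fun j => ∑ n ∈ Finset.range (j + 1), G n * σv (j - n) with hf
    have hM0 : 0 ≤ M := le_trans (hσvnn 0) (hM 0)
    have hA0 : 0 ≤ A := tsum_nonneg hGnonneg
    have hu := uniq_rec T S hS0 hS f σu (fun k => hrec k)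
    have hfle : ∀ j, f j ≤ M * A := by
      intro j
      calc f j ≤ ∑ n ∈ Finset.range (j + 1), G n * M := by
            apply Finset.sum_le_sum
            intro n _
            exact mul_le_mul_of_nonneg_left (hM _) (hGnonneg n)
        _ = (∑ n ∈ Finset.range (j + 1), G n) * M := by rw [Finset.sum_mul]
        _ ≤ A * M := by
            apply mul_le_mul_of_nonneg_right _ hM0
            exact Summable.sum_le_tsum _ (fun n _ => hGnonneg n) hGsum
        _ = M * A := mul_comm _ _
    have hfnn : ∀ j, 0 ≤ f j := by
      intro j
      apply Finset.sum_nonneg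
      intro n _
      exact mul_nonneg (hGnonneg n) (hσvnn _)
    refine ⟨C * (M * A), fun k => ?_⟩
    have h0 : 0 ≤ σu k := by
      rw [hu k]
      apply Finset.sum_nonneg
      intro m _
      exact mul_nonneg (hSnn m) (hfnn _)
    rw [abs_of_nonneg h0, hu k]
    calc ∑ m ∈ Finset.range (k + 1), S m * f (k - m)
        ≤ ∑ m ∈ Finset.range (k + 1), S m * (M * A) := by
          apply Finset.sum_le_sum
          intro m _
          exact mul_le_mul_of_nonneg_left (hfle _) (hSnn m)
      _ = (∑ m ∈ Finset.range (k + 1), S m) * (M * A) := by rw [Finset.sum_mul]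
      _ ≤ C * (M * A) := mul_le_mul_of_nonneg_right (hC k) (mul_nonneg hM0 hA0)
end

section
/- Let T̂ : ℕ → ℝ be a nonnegative sequence with T̂(0) = 0 whose series Σ_{n=1}^{∞} T̂(n) converges to a value A. Define Ŝ : ℕ → ℝ by Ŝ(0) = 1 and Ŝ(k+1) = Σ_{n=0}^{k} Ŝ(n)·T̂(k+1−n) for k ≥ 0. If Σ_{k=0}^{∞} Ŝ(k) converges, then A < 1 and Σ_{k=0}^{∞} Ŝ(k) = 1/(1−A). -/
/-- Let `T̂` be nonnegative with `T̂ 0 = 0` and `Σ_{n=1}^∞ T̂ n = A`,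
and define `Ŝ 0 = 1`, `Ŝ (k+1) = Σ_{n=0}^k Ŝ n ⬝ T̂ (k+1-n)`. If `Σ Ŝ` converges, then
`A < 1` and `Σ_{k=0}^∞ Ŝ k = 1 / (1 - A)`. -/
theorem stmt12
    (T S : ℕ → ℝ) (A : ℝ)
    (hTnonneg : ∀ n, 0 ≤ T n) (hT0 : T 0 = 0)
    (hA : HasSum T A)
    (hS0 : S 0 = 1)
    (hS : ∀ k : ℕ, S (k + 1) = ∑ n ∈ Finset.range (k + 1), S n * T (k + 1 - n))
    (hSsum : Summable S) :
    A < 1 ∧ ∑' k, S k = 1 / (1 - A) := by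
  have hSnn : ∀ n, 0 ≤ S n := by
    intro n
    induction n using Nat.strong_induction_on with
    | _ n ih =>
      cases n with
      | zero => simp [hS0]
      | succ k =>
        rw [hS k]
        exact Finset.sum_nonneg fun i hi =>
          mul_nonneg (ih i (Finset.mem_range.mp hi)) (hTnonneg _)
  set B := ∑' k, S k with hB
  have hTsum : Summable T := hA.summable
  have hSnorm : Summable fun x => ‖S x‖ := by
    simpa [Real.norm_of_nonneg (hSnn _)] using hSsum
  have hTnorm : Summable fun x => ‖T x‖ := by
    simpa [Real.norm_of_nonneg (hTnonneg _)] using hTsum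
  set c : ℕ → ℝ := fun n => ∑ k ∈ Finset.range (n + 1), S k * T (n - k) with hc
  have hcsum : Summable c := summable_norm_sum_mul_range_of_summable_norm hSnorm hTnorm |>.of_norm
  have hcB : ∑' n, c n = B * A := by
    rw [← tsum_mul_tsum_eq_tsum_sum_range_of_summable_norm hSnorm hTnorm, hA.tsum_eq]
  have hc0 : c 0 = 0 := by simp [hc, hT0]
  have hcS : ∀ k, c (k + 1) = S (k + 1) := by
    intro k
    rw [hS k, hc]
    simp only []
    rw [show k+1+1 = (k+1)+1 from rfl, Finset.sum_range_succ (fun n => S n * T (k + 1 - n)) (k+1)]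
    simp [hT0]
  have h1 : ∑' n, c n = ∑' n, S (n + 1) := by
    rw [Summable.tsum_eq_zero_add hcsum, hc0, zero_add]
    exact tsum_congr hcS
  have h2 : B = 1 + ∑' n, S (n + 1) := by
    rw [hB, Summable.tsum_eq_zero_add hSsum, hS0]
  have key : B * A = B - 1 := by
    rw [← hcB, h1]
    linarith [h2]
  have hB1 : 1 ≤ B := by
    have := Summable.le_tsum hSsum 0 (fun i _ => hSnn i)
    simpa [hS0] using this
  have hBpos : 0 < B := by linarith
  have hprod : B * (1 - A) = 1 := by ring_nf; linarith [key]
  have h1A : 1 - A = 1 / B := by field_simp at hprod ⊢; linarith [hprod]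
  constructor
  · have : 0 < 1 - A := by rw [h1A]; positivity
    linarith
  · rw [h1A]
    field_simp
end

section
/- Let T̂ : ℕ → ℝ be a nonnegative sequence with T̂(0) = 0 whose series Σ_{n=1}^{∞} T̂(n) converges to a value A. Define Ŝ : ℕ → ℝ by Ŝ(0) = 1 and Ŝ(m) = Σ_{l=1}^{m} T̂(l)·Ŝ(m−l) for m ≥ 1. Then Σ_{k=0}^{∞} Ŝ(k) converges (equivalently, sup_{k≥0} Σ_{i=0}^{k} Ŝ(i) < ∞) if and only if A < 1; moreover, when A < 1, Σ_{i=0}^{k} Ŝ(i) ≤ 1/(1−A) for every k ≥ 0. -/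
/-- Let `T̂` be nonnegative with `T̂ 0 = 0` and `Σ_{n=1}^∞ T̂ n = A`,
and define `Ŝ 0 = 1`, `Ŝ m = Σ_{l=1}^m T̂ l ⬝ Ŝ (m-l)` for `m ≥ 1`. Then `Σ Ŝ` converges
iff `A < 1`, and in that case every partial sum `Σ_{i=0}^k Ŝ i` is at most `1 / (1 - A)`. -/
theorem stmt13
    (T S : ℕ → ℝ) (A : ℝ)
    (hTnonneg : ∀ n, 0 ≤ T n) (hT0 : T 0 = 0)
    (hA : HasSum T A)
    (hS0 : S 0 = 1)
    (hS : ∀ m : ℕ, 1 ≤ m → S m = ∑ l ∈ Finset.Icc 1 m, T l * S (m - l)) :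
    (Summable S ↔ A < 1) ∧
    (A < 1 → ∀ k : ℕ, ∑ i ∈ Finset.range (k + 1), S i ≤ 1 / (1 - A)) := by
  -- S is nonnegative
  have hSnonneg : ∀ m, 0 ≤ S m := by
    intro m
    induction m using Nat.strong_induction_on with
    | _ m ih =>
      rcases Nat.eq_zero_or_pos m with hm | hm
      · simp [hm, hS0]
      · rw [hS m hm]
        refine Finset.sum_nonneg fun l hl => ?_
        exact mul_nonneg (hTnonneg l) (ih (m - l) (by
          simp only [Finset.mem_Icc] at hl
          omega))
  -- partial sums of T are ≤ A
  have hTsum_le : ∀ s : Finset ℕ, ∑ l ∈ s, T l ≤ A :=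
    fun s => sum_le_hasSum s (fun i _ => hTnonneg i) hA
  have hA0 : 0 ≤ A := hA.nonneg hTnonneg
  -- key identity for partial sums
  have key : ∀ k : ℕ, ∑ i ∈ Finset.range (k + 1), S i
      = 1 + ∑ l ∈ Finset.Icc 1 k, T l * ∑ j ∈ Finset.range (k + 1 - l), S j := by
    intro k
    have h1 : ∑ i ∈ Finset.range (k + 1), S i = 1 + ∑ m ∈ Finset.Icc 1 k, S m := by
      rw [Finset.range_eq_Ico, Finset.sum_eq_sum_Ico_succ_bot (Nat.succ_pos k), hS0]
      congr 1
    rw [h1]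
    congr 1
    calc ∑ m ∈ Finset.Icc 1 k, S m
        = ∑ m ∈ Finset.Icc 1 k, ∑ l ∈ Finset.Icc 1 m, T l * S (m - l) := by
          refine Finset.sum_congr rfl fun m hm => ?_
          simp only [Finset.mem_Icc] at hm
          exact hS m hm.1
      _ = ∑ l ∈ Finset.Icc 1 k, ∑ m ∈ Finset.Icc l k, T l * S (m - l) := by
          refine Finset.sum_comm' ?_
          intro m l
          simp only [Finset.mem_Icc]
          omega
      _ = ∑ l ∈ Finset.Icc 1 k, T l * ∑ j ∈ Finset.range (k + 1 - l), S j := by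
          refine Finset.sum_congr rfl fun l hl => ?_
          rw [Finset.mul_sum]
          rw [show Finset.Icc l k = Finset.Ico l (k + 1) from rfl,
            Finset.sum_Ico_eq_sum_range]
          refine Finset.sum_congr rfl fun j hj => ?_
          congr 1
          simp
  -- the uniform bound when A < 1
  have bound : A < 1 → ∀ k : ℕ, ∑ i ∈ Finset.range (k + 1), S i ≤ 1 / (1 - A) := by
    intro hA1
    have h1A : 0 < 1 - A := by linarith
    intro k
    induction k using Nat.strong_induction_on with
    | _ k ih =>
      rw [key k]
      have hstep : ∑ l ∈ Finset.Icc 1 k, T l * ∑ j ∈ Finset.range (k + 1 - l), S j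
          ≤ ∑ l ∈ Finset.Icc 1 k, T l * (1 / (1 - A)) := by
        refine Finset.sum_le_sum fun l hl => ?_
        simp only [Finset.mem_Icc] at hl
        have hkl : k + 1 - l = (k - l) + 1 := by omega
        rw [hkl]
        exact mul_le_mul_of_nonneg_left (ih (k - l) (by omega)) (hTnonneg l)
      rw [← Finset.sum_mul] at hstep
      have : ∑ l ∈ Finset.Icc 1 k, T l * ∑ j ∈ Finset.range (k + 1 - l), S j
          ≤ A * (1 / (1 - A)) := by
        refine hstep.trans ?_
        exact mul_le_mul_of_nonneg_right (hTsum_le _) (by positivity)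
      have heq : 1 + A * (1 / (1 - A)) = 1 / (1 - A) := by
        field_simp
        ring
      linarith
  refine ⟨⟨?_, ?_⟩, bound⟩
  · -- Summable S → A < 1
    intro hsum
    set B := ∑' n, S n with hB
    have hB1 : 1 ≤ B := by
      have := Summable.le_tsum hsum 0 (fun j _ => hSnonneg j)
      rwa [hS0] at this
    have hBpos : 0 < B := by linarith
    -- Cauchy product
    have hTn : Summable fun n => ‖T n‖ := by
      have : (fun n => ‖T n‖) = T :=
        funext fun n => by rw [Real.norm_eq_abs, abs_of_nonneg (hTnonneg n)]
      rw [this]; exact hA.summable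
    have hSn : Summable fun n => ‖S n‖ := by
      have : (fun n => ‖S n‖) = S :=
        funext fun n => by rw [Real.norm_eq_abs, abs_of_nonneg (hSnonneg n)]
      rw [this]; exact hsum
    have hcauchy := tsum_mul_tsum_eq_tsum_sum_range_of_summable_norm hTn hSn
    rw [hA.tsum_eq, ← hB] at hcauchy
    -- the convolution equals S n minus the Kronecker delta
    have hconv : ∀ n : ℕ, ∑ k ∈ Finset.range (n + 1), T k * S (n - k)
        = S n - (if n = 0 then (1:ℝ) else 0) := by
      intro n
      rcases Nat.eq_zero_or_pos n with hn | hn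
      · simp [hn, hT0, hS0]
      · have hn0 : n ≠ 0 := by omega
        simp only [hn0, if_false, sub_zero]
        rw [hS n hn]
        rw [Finset.range_eq_Ico, Finset.sum_eq_sum_Ico_succ_bot (Nat.succ_pos n), hT0,
          zero_mul, zero_add]
        rfl
    have hdelta : HasSum (fun n => if n = 0 then (1:ℝ) else 0) 1 := hasSum_ite_eq 0 1
    have hsub : HasSum (fun n => S n - (if n = 0 then (1:ℝ) else 0)) (B - 1) :=
      hsum.hasSum.sub hdelta
    have htsum : (∑' n, ∑ k ∈ Finset.range (n + 1), T k * S (n - k)) = B - 1 := by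
      rw [tsum_congr hconv, hsub.tsum_eq]
    rw [htsum] at hcauchy
    -- A * B = B - 1 with B ≥ 1 forces A < 1
    by_contra h
    push_neg at h
    nlinarith
  · -- A < 1 → Summable S
    intro hA1
    refine summable_of_sum_range_le hSnonneg (c := 1 / (1 - A)) fun n => ?_
    rcases Nat.eq_zero_or_pos n with hn | hn
    · have h1A : (0:ℝ) ≤ 1 - A := by linarith
      simp only [hn, Finset.range_zero, Finset.sum_empty]
      positivity
    · obtain ⟨k, rfl⟩ : ∃ k, n = k + 1 := ⟨n - 1, by omega⟩
      exact bound hA1 k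
end

section
/- Let Ĝ, T̂ : ℕ → ℝ be nonnegative sequences with Ĝ(0) = T̂(0) = 0, B := Σ_{n=1}^{∞} Ĝ(n) < ∞ and A := Σ_{n=1}^{∞} T̂(n) < 1. Let σ_v² ≥ 0 and let σ_u : ℕ → ℝ satisfy σ_u(k) = Σ_{n=0}^{k} Ĝ(n)·σ_v² + Σ_{n=1}^{k} T̂(n)·σ_u(k−n) for all k ≥ 0 (constant input variance). Then the sequence (σ_u(k))_{k≥0} is monotonically nondecreasing and converges, with lim_{k→∞} σ_u(k) = B·σ_v²/(1−A). -/
open Filter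

/-- For nonnegative `Ĝ, T̂` with `Ĝ 0 = T̂ 0 = 0`, `Σ Ĝ = B < ∞`,
`Σ T̂ = A < 1`, and `σu` satisfying the variance recursion with constant input variance
`σv²`, the sequence `σu` is monotonically nondecreasing and converges to `B σv² / (1-A)`. -/
theorem stmt14
    (G T : ℕ → ℝ) (A B : ℝ)
    (hGnonneg : ∀ n, 0 ≤ G n) (hTnonneg : ∀ n, 0 ≤ T n)
    (hG0 : G 0 = 0) (hT0 : T 0 = 0)
    (hB : HasSum G B) (hA : HasSum T A) (hA1 : A < 1)
    (σv2 : ℝ) (hσv2 : 0 ≤ σv2)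
    (σu : ℕ → ℝ)
    (hσu : ∀ k, σu k = ∑ n ∈ Finset.range (k + 1), G n * σv2
      + ∑ n ∈ Finset.Icc 1 k, T n * σu (k - n)) :
    Monotone σu ∧ Tendsto σu atTop (nhds (B * σv2 / (1 - A))) := by
  have hA0 : 0 ≤ A := hA.nonneg hTnonneg
  have hB0 : 0 ≤ B := hB.nonneg hGnonneg
  have h1A : 0 < 1 - A := by linarith
  set L := B * σv2 / (1 - A) with hLdef
  have hL0 : 0 ≤ L := div_nonneg (mul_nonneg hB0 hσv2) h1A.le
  have h0 : σu 0 = 0 := by rw [hσu 0]; simp [hG0]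
  have hstep : ∀ k, σu k ≤ σu (k + 1) := by
    intro k
    induction k using Nat.strong_induction_on with
    | _ k ih =>
      rw [hσu k, hσu (k + 1)]
      rw [Finset.sum_range_succ (fun n => G n * σv2) (k + 1),
        Finset.sum_Icc_succ_top (by omega : 1 ≤ k + 1) (fun n => T n * σu (k + 1 - n))]
      have h1 : ∑ n ∈ Finset.Icc 1 k, T n * σu (k - n)
          ≤ ∑ n ∈ Finset.Icc 1 k, T n * σu (k + 1 - n) := by
        refine Finset.sum_le_sum fun n hn => ?_
        obtain ⟨h1n, hnk⟩ := Finset.mem_Icc.mp hn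
        have he : k + 1 - n = (k - n) + 1 := by omega
        rw [he]
        exact mul_le_mul_of_nonneg_left (ih (k - n) (by omega)) (hTnonneg n)
      have h2 : 0 ≤ G (k + 1) * σv2 := mul_nonneg (hGnonneg _) hσv2
      have h3 : T (k + 1) * σu (k + 1 - (k + 1)) = 0 := by
        simp [Nat.sub_self, h0]
      linarith
  have hmono : Monotone σu := monotone_nat_of_le_succ hstep
  have hpos : ∀ j, 0 ≤ σu j := fun j => h0 ▸ hmono (Nat.zero_le j)
  have hub : ∀ k, σu k ≤ L := by
    intro k
    induction k using Nat.strong_induction_on with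
    | _ k ih =>
      rw [hσu k]
      have h1 : ∑ n ∈ Finset.range (k + 1), G n * σv2 ≤ B * σv2 := by
        rw [← Finset.sum_mul]
        exact mul_le_mul_of_nonneg_right
          (sum_le_hasSum _ (fun i _ => hGnonneg i) hB) hσv2
      have h2 : ∑ n ∈ Finset.Icc 1 k, T n * σu (k - n) ≤ A * L := by
        calc ∑ n ∈ Finset.Icc 1 k, T n * σu (k - n)
            ≤ ∑ n ∈ Finset.Icc 1 k, T n * L := by
              refine Finset.sum_le_sum fun n hn => ?_
              obtain ⟨h1n, hnk⟩ := Finset.mem_Icc.mp hn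
              exact mul_le_mul_of_nonneg_left (ih (k - n) (by omega)) (hTnonneg n)
          _ = (∑ n ∈ Finset.Icc 1 k, T n) * L := by rw [Finset.sum_mul]
          _ ≤ A * L := mul_le_mul_of_nonneg_right
              (sum_le_hasSum _ (fun i _ => hTnonneg i) hA) hL0
      have hfix : B * σv2 + A * L = L := by
        rw [hLdef]; field_simp; ring
      linarith
  have hbdd : BddAbove (Set.range σu) := ⟨L, by rintro x ⟨k, rfl⟩; exact hub k⟩
  set c := ⨆ k, σu k with hcdef
  have hc : Tendsto σu atTop (nhds c) := tendsto_atTop_ciSup hmono hbdd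
  have hcL : c ≤ L := ciSup_le hub
  have hTm : ∀ m, ∑ n ∈ Finset.Icc 1 m, T n = ∑ n ∈ Finset.range (m + 1), T n := by
    intro m
    induction m with
    | zero => simp [hT0]
    | succ m ih =>
      rw [Finset.sum_range_succ, ← ih, Finset.sum_Icc_succ_top (by omega : 1 ≤ m + 1)]
  have key : ∀ m, B * σv2 + (∑ n ∈ Finset.Icc 1 m, T n) * c ≤ c := by
    intro m
    have hG' : Tendsto (fun k => (∑ n ∈ Finset.range (k + 1), G n) * σv2) atTop
        (nhds (B * σv2)) :=
      (hB.tendsto_sum_nat.comp (tendsto_add_atTop_nat 1)).mul_const σv2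
    have hσ' : Tendsto (fun k => σu (k - m)) atTop (nhds c) :=
      hc.comp (tendsto_sub_atTop_nat m)
    have hrhs : Tendsto (fun k => (∑ n ∈ Finset.range (k + 1), G n) * σv2
        + (∑ n ∈ Finset.Icc 1 m, T n) * σu (k - m)) atTop
        (nhds (B * σv2 + (∑ n ∈ Finset.Icc 1 m, T n) * c)) :=
      hG'.add (hσ'.const_mul _)
    refine le_of_tendsto_of_tendsto hrhs hc ?_
    filter_upwards [eventually_ge_atTop m] with k hk
    show (∑ n ∈ Finset.range (k + 1), G n) * σv2
        + (∑ n ∈ Finset.Icc 1 m, T n) * σu (k - m) ≤ σu k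
    rw [hσu k, Finset.sum_mul]
    have h2 : (∑ n ∈ Finset.Icc 1 m, T n * σu (k - m))
        ≤ ∑ n ∈ Finset.Icc 1 k, T n * σu (k - n) := by
      calc ∑ n ∈ Finset.Icc 1 m, T n * σu (k - m)
          ≤ ∑ n ∈ Finset.Icc 1 m, T n * σu (k - n) := by
            refine Finset.sum_le_sum fun n hn => ?_
            obtain ⟨h1n, hnm⟩ := Finset.mem_Icc.mp hn
            exact mul_le_mul_of_nonneg_left (hmono (by omega)) (hTnonneg n)
        _ ≤ ∑ n ∈ Finset.Icc 1 k, T n * σu (k - n) :=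
            Finset.sum_le_sum_of_subset_of_nonneg
              (Finset.Icc_subset_Icc_right hk)
              (fun n _ _ => mul_nonneg (hTnonneg n) (hpos _))
    rw [Finset.sum_mul] at *
    linarith
  have hAc : B * σv2 + A * c ≤ c := by
    have hT' : Tendsto (fun m => B * σv2 + (∑ n ∈ Finset.Icc 1 m, T n) * c) atTop
        (nhds (B * σv2 + A * c)) := by
      have h1 : Tendsto (fun m => ∑ n ∈ Finset.Icc 1 m, T n) atTop (nhds A) := by
        simp only [hTm]
        exact hA.tendsto_sum_nat.comp (tendsto_add_atTop_nat 1)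
      exact tendsto_const_nhds.add (h1.mul_const c)
    exact le_of_tendsto hT' (Eventually.of_forall key)
  have hLc : L ≤ c := by
    rw [hLdef, div_le_iff₀ h1A]
    nlinarith
  have hceq : c = L := le_antisymm hcL hLc
  exact ⟨hmono, hceq ▸ hc⟩
end

section
/- Let Ĝ, T̂ : ℕ → ℝ be nonnegative sequences with Ĝ(0) = T̂(0) = 0, B := Σ_{n=1}^{∞} Ĝ(n) < ∞ and A := Σ_{n=1}^{∞} T̂(n) < 1. Let σ_v : ℕ → ℝ be a bounded nonnegative sequence converging to a limit σ_∞², and let σ_u : ℕ → ℝ satisfy σ_u(k) = Σ_{n=0}^{k} Ĝ(n)·σ_v(k−n) + Σ_{n=1}^{k} T̂(n)·σ_u(k−n) for all k ≥ 0. Then σ_u(k) converges and lim_{k→∞} σ_u(k) = B·σ_∞²/(1−A). -/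
open Filter


lemma conv_ev_le (a x : ℕ → ℝ) (S M c ε : ℝ)
    (ha : ∀ n, 0 ≤ a n) (hS : HasSum a S)
    (hx0 : ∀ n, 0 ≤ x n) (hxM : ∀ n, x n ≤ M)
    (hev : ∀ᶠ n in atTop, x n ≤ c) (hε : 0 < ε) :
    ∀ᶠ k in atTop, ∑ n ∈ Finset.range (k + 1), a n * x (k - n) ≤ S * c + ε := by
  have hM : 0 ≤ M := le_trans (hx0 0) (hxM 0)
  set ε' : ℝ := ε / (M + |c| + 1) with hε'def
  have hden : 0 < M + |c| + 1 := by positivity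
  have hε' : 0 < ε' := by positivity
  obtain ⟨N₁, hN₁⟩ := Metric.tendsto_atTop.1 hS.tendsto_sum_nat ε' hε'
  have hpart : |∑ n ∈ Finset.range N₁, a n - S| < ε' := by
    simpa [Real.dist_eq] using hN₁ N₁ le_rfl
  obtain ⟨N₀, hN₀⟩ := eventually_atTop.1 hev
  refine eventually_atTop.2 ⟨N₀ + N₁, fun k hk => ?_⟩
  have hN₁k : N₁ ≤ k + 1 := by omega
  rw [← Finset.sum_range_add_sum_Ico _ hN₁k]
  have h1 : ∑ n ∈ Finset.range N₁, a n * x (k - n) ≤ (∑ n ∈ Finset.range N₁, a n) * c := by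
    rw [Finset.sum_mul]
    refine Finset.sum_le_sum fun n hn => ?_
    have hn' : n < N₁ := Finset.mem_range.1 hn
    exact mul_le_mul_of_nonneg_left (hN₀ _ (by omega)) (ha n)
  have h2 : ∑ n ∈ Finset.Ico N₁ (k + 1), a n * x (k - n)
      ≤ (∑ n ∈ Finset.Ico N₁ (k + 1), a n) * M := by
    rw [Finset.sum_mul]
    exact Finset.sum_le_sum fun n _ => mul_le_mul_of_nonneg_left (hxM _) (ha n)
  have htail : ∑ n ∈ Finset.Ico N₁ (k + 1), a n ≤ ε' := by
    have := Finset.sum_range_add_sum_Ico a hN₁k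
    have hle : ∑ n ∈ Finset.range (k + 1), a n ≤ S :=
      sum_le_hasSum _ (fun i _ => ha i) hS
    have := abs_lt.1 hpart
    linarith
  have h1' : (∑ n ∈ Finset.range N₁, a n) * c ≤ S * c + ε' * |c| := by
    have : (∑ n ∈ Finset.range N₁, a n) * c - S * c
        = (∑ n ∈ Finset.range N₁, a n - S) * c := by ring
    nlinarith [abs_nonneg c, le_abs_self ((∑ n ∈ Finset.range N₁, a n - S) * c),
      abs_mul (∑ n ∈ Finset.range N₁, a n - S) c,
      mul_le_mul_of_nonneg_right (le_of_lt hpart) (abs_nonneg c)]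
  have h2' : (∑ n ∈ Finset.Ico N₁ (k + 1), a n) * M ≤ ε' * M :=
    mul_le_mul_of_nonneg_right htail hM
  have hfin : ε' * |c| + ε' * M ≤ ε := by
    rw [hε'def]
    rw [div_mul_eq_mul_div, div_mul_eq_mul_div, ← add_div, div_le_iff₀ hden]
    nlinarith [abs_nonneg c]
  linarith

lemma conv_ev_ge (a x : ℕ → ℝ) (S c ε : ℝ)
    (ha : ∀ n, 0 ≤ a n) (hS : HasSum a S)
    (hx0 : ∀ n, 0 ≤ x n)
    (hev : ∀ᶠ n in atTop, c ≤ x n) (hε : 0 < ε) :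
    ∀ᶠ k in atTop, S * c - ε ≤ ∑ n ∈ Finset.range (k + 1), a n * x (k - n) := by
  set ε' : ℝ := ε / (|c| + 1) with hε'def
  have hden : 0 < |c| + 1 := by positivity
  have hε' : 0 < ε' := by positivity
  obtain ⟨N₁, hN₁⟩ := Metric.tendsto_atTop.1 hS.tendsto_sum_nat ε' hε'
  have hpart : |∑ n ∈ Finset.range N₁, a n - S| < ε' := by
    simpa [Real.dist_eq] using hN₁ N₁ le_rfl
  obtain ⟨N₀, hN₀⟩ := eventually_atTop.1 hev
  refine eventually_atTop.2 ⟨N₀ + N₁, fun k hk => ?_⟩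
  have hN₁k : N₁ ≤ k + 1 := by omega
  rw [← Finset.sum_range_add_sum_Ico _ hN₁k]
  have h1 : (∑ n ∈ Finset.range N₁, a n) * c ≤ ∑ n ∈ Finset.range N₁, a n * x (k - n) := by
    rw [Finset.sum_mul]
    refine Finset.sum_le_sum fun n hn => ?_
    have hn' : n < N₁ := Finset.mem_range.1 hn
    exact mul_le_mul_of_nonneg_left (hN₀ _ (by omega)) (ha n)
  have h2 : 0 ≤ ∑ n ∈ Finset.Ico N₁ (k + 1), a n * x (k - n) :=
    Finset.sum_nonneg fun n _ => mul_nonneg (ha n) (hx0 _)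
  have h1' : S * c - ε' * |c| ≤ (∑ n ∈ Finset.range N₁, a n) * c := by
    nlinarith [abs_nonneg c, le_abs_self (-((∑ n ∈ Finset.range N₁, a n - S) * c)),
      abs_mul (∑ n ∈ Finset.range N₁, a n - S) c, abs_neg ((∑ n ∈ Finset.range N₁, a n - S) * c),
      mul_le_mul_of_nonneg_right (le_of_lt hpart) (abs_nonneg c)]
  have hfin : ε' * |c| ≤ ε := by
    rw [hε'def, div_mul_eq_mul_div, div_le_iff₀ hden]
    nlinarith [abs_nonneg c]
  linarith

/-- For nonnegative `Ĝ, T̂` with `Ĝ 0 = T̂ 0 = 0`, `Σ Ĝ = B < ∞`,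
`Σ T̂ = A < 1`, a bounded nonnegative input-variance sequence `σv` converging to `σ∞²`,
and `σu` satisfying the variance recursion, `σu` converges to `B σ∞² / (1 - A)`. -/
theorem stmt16
    (G T : ℕ → ℝ) (A B : ℝ)
    (hGnonneg : ∀ n, 0 ≤ G n) (hTnonneg : ∀ n, 0 ≤ T n)
    (hG0 : G 0 = 0) (hT0 : T 0 = 0)
    (hB : HasSum G B) (hA : HasSum T A) (hA1 : A < 1)
    (σv : ℕ → ℝ) (σinf2 : ℝ)
    (hσvnonneg : ∀ k, 0 ≤ σv k) (hσvbdd : ∃ C, ∀ k, σv k ≤ C)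
    (hσvlim : Tendsto σv atTop (nhds σinf2))
    (σu : ℕ → ℝ)
    (hσu : ∀ k, σu k = ∑ n ∈ Finset.range (k + 1), G n * σv (k - n)
      + ∑ n ∈ Finset.Icc 1 k, T n * σu (k - n)) :
    Tendsto σu atTop (nhds (B * σinf2 / (1 - A))) := by
  obtain ⟨C, hC⟩ := hσvbdd
  have hC0 : 0 ≤ C := le_trans (hσvnonneg 0) (hC 0)
  have hA0 : 0 ≤ A := by simpa using sum_le_hasSum ∅ (fun i _ => hTnonneg i) hA
  have hB0 : 0 ≤ B := by simpa using sum_le_hasSum ∅ (fun i _ => hGnonneg i) hB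
  have h1A : 0 < 1 - A := by linarith
  have hσinf : 0 ≤ σinf2 := ge_of_tendsto' hσvlim hσvnonneg
  -- rewrite recursion using range sums for T as well
  have hIcc : ∀ (f : ℕ → ℝ) (k : ℕ), f 0 = 0 →
      ∑ n ∈ Finset.Icc 1 k, f n = ∑ n ∈ Finset.range (k + 1), f n := by
    intro f k hf0
    have : Finset.range (k + 1) = insert 0 (Finset.Icc 1 k) := by
      ext n; simp [Nat.lt_succ_iff]; omega
    rw [this, Finset.sum_insert (by simp)]
    simp [hf0]
  have hσu' : ∀ k, σu k = ∑ n ∈ Finset.range (k + 1), G n * σv (k - n)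
      + ∑ n ∈ Finset.range (k + 1), T n * σu (k - n) := by
    intro k
    rw [hσu k, hIcc (fun n => T n * σu (k - n)) k (by simp [hT0])]
  -- boundedness of σu
  set K : ℝ := B * C / (1 - A) with hKdef
  have hK0 : 0 ≤ K := by positivity
  have hbound : ∀ k, 0 ≤ σu k ∧ σu k ≤ K := by
    intro k
    induction k using Nat.strong_induction_on with
    | _ k ih =>
      constructor
      · rw [hσu k]
        refine add_nonneg (Finset.sum_nonneg fun n _ => mul_nonneg (hGnonneg n) (hσvnonneg _)) ?_
        refine Finset.sum_nonneg fun n hn => ?_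
        have hn' := Finset.mem_Icc.1 hn
        exact mul_nonneg (hTnonneg n) (ih (k - n) (by omega)).1
      · rw [hσu k]
        have hg : ∑ n ∈ Finset.range (k + 1), G n * σv (k - n)
            ≤ (∑ n ∈ Finset.range (k + 1), G n) * C := by
          rw [Finset.sum_mul]
          exact Finset.sum_le_sum fun n _ => mul_le_mul_of_nonneg_left (hC _) (hGnonneg n)
        have hg2 : (∑ n ∈ Finset.range (k + 1), G n) * C ≤ B * C :=
          mul_le_mul_of_nonneg_right (sum_le_hasSum _ (fun i _ => hGnonneg i) hB) hC0
        have ht : ∑ n ∈ Finset.Icc 1 k, T n * σu (k - n)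
            ≤ (∑ n ∈ Finset.Icc 1 k, T n) * K := by
          rw [Finset.sum_mul]
          refine Finset.sum_le_sum fun n hn => ?_
          have hn' := Finset.mem_Icc.1 hn
          exact mul_le_mul_of_nonneg_left (ih (k - n) (by omega)).2 (hTnonneg n)
        have ht2 : (∑ n ∈ Finset.Icc 1 k, T n) * K ≤ A * K :=
          mul_le_mul_of_nonneg_right (sum_le_hasSum _ (fun i _ => hTnonneg i) hA) hK0
        have hKeq : B * C + A * K = K := by
          rw [hKdef]; field_simp; ring
        linarith
  have hbddle : IsBoundedUnder (· ≤ ·) atTop σu :=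
    isBoundedUnder_of ⟨K, fun k => (hbound k).2⟩
  have hbddge : IsBoundedUnder (· ≥ ·) atTop σu :=
    isBoundedUnder_of ⟨0, fun k => (hbound k).1⟩
  set L : ℝ := limsup σu atTop with hLdef
  set l : ℝ := liminf σu atTop with hldef
  -- upper bound: L * (1 - A) ≤ B * σinf2
  have hup : L * (1 - A) ≤ B * σinf2 := by
    have key : ∀ ε : ℝ, 0 < ε → L * (1 - A) ≤ B * σinf2 + (B + A + 3) * ε := by
      intro ε hε
      have hσuL : ∀ᶠ k in atTop, σu k ≤ L + ε := by
        have := eventually_lt_of_limsup_lt (show limsup σu atTop < L + ε by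
          rw [← hLdef]; linarith) hbddle
        exact this.mono fun k hk => le_of_lt hk
      have hσvc : ∀ᶠ k in atTop, σv k ≤ σinf2 + ε :=
        (hσvlim.eventually_lt_const (by linarith : σinf2 < σinf2 + ε)).mono
          fun k hk => le_of_lt hk
      have hGconv := conv_ev_le G σv B C (σinf2 + ε) ε hGnonneg hB hσvnonneg hC hσvc hε
      have hTconv := conv_ev_le T σu A K (L + ε) ε hTnonneg hA
        (fun k => (hbound k).1) (fun k => (hbound k).2) hσuL hε
      have hcomb : ∀ᶠ k in atTop, σu k ≤ B * σinf2 + A * L + (B + A + 2) * ε := by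
        filter_upwards [hGconv, hTconv] with k h1 h2
        rw [hσu' k]; nlinarith
      have : L ≤ B * σinf2 + A * L + (B + A + 2) * ε :=
        limsup_le_of_le (hbddge.isCoboundedUnder_le) hcomb
      nlinarith
    have hpos : 0 < B + A + 3 := by linarith
    refine le_of_forall_pos_le_add fun ε hε => ?_
    have h := key (ε / (B + A + 3)) (div_pos hε hpos)
    rwa [mul_div_cancel₀ _ (ne_of_gt hpos)] at h
  -- lower bound
  have hlo : B * σinf2 ≤ l * (1 - A) := by
    have key : ∀ ε : ℝ, 0 < ε → B * σinf2 - (B + A + 3) * ε ≤ l * (1 - A) := by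
      intro ε hε
      have hσul : ∀ᶠ k in atTop, l - ε ≤ σu k := by
        have := eventually_lt_of_lt_liminf (show l - ε < liminf σu atTop by
          rw [← hldef]; linarith) hbddge
        exact this.mono fun k hk => le_of_lt hk
      have hσvc : ∀ᶠ k in atTop, σinf2 - ε ≤ σv k :=
        (hσvlim.eventually_const_lt (by linarith : σinf2 - ε < σinf2)).mono
          fun k hk => le_of_lt hk
      have hGconv := conv_ev_ge G σv B (σinf2 - ε) ε hGnonneg hB hσvnonneg hσvc hε
      have hTconv := conv_ev_ge T σu A (l - ε) ε hTnonneg hA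
        (fun k => (hbound k).1) hσul hε
      have hcomb : ∀ᶠ k in atTop, B * σinf2 + A * l - (B + A + 2) * ε ≤ σu k := by
        filter_upwards [hGconv, hTconv] with k h1 h2
        rw [hσu' k]; nlinarith
      have : B * σinf2 + A * l - (B + A + 2) * ε ≤ l :=
        le_liminf_of_le (hbddle.isCoboundedUnder_ge) hcomb
      nlinarith
    have hpos : 0 < B + A + 3 := by linarith
    refine le_of_forall_pos_le_add fun ε hε => ?_
    have h := key (ε / (B + A + 3)) (div_pos hε hpos)
    rw [mul_div_cancel₀ _ (ne_of_gt hpos)] at h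
    linarith
  have hlL : l ≤ L := liminf_le_limsup hbddle hbddge
  have hLval : L = B * σinf2 / (1 - A) := by
    have h1 : L ≤ B * σinf2 / (1 - A) := by
      rw [le_div_iff₀ h1A]; exact hup
    have h2 : B * σinf2 / (1 - A) ≤ l := by
      rw [div_le_iff₀ h1A]; exact hlo
    linarith
  have hlval : l = B * σinf2 / (1 - A) := by
    have h2 : B * σinf2 / (1 - A) ≤ l := by
      rw [div_le_iff₀ h1A]; exact hlo
    linarith [hLval ▸ hlL]
  exact tendsto_of_liminf_eq_limsup hlval hLval hbddle hbddge
end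

section
/- Let T̂ : ℕ → ℝ be a nonnegative sequence with T̂(0) = 0 and Σ_{n=1}^{∞} T̂(n) < 1, and let f : ℕ → ℝ be a bounded nonnegative sequence with f(k) → 0 as k → ∞. If σ : ℕ → ℝ satisfies σ(k) = f(k) + Σ_{n=1}^{k} T̂(n)·σ(k−n) for all k ≥ 0, then lim_{k→∞} σ(k) = 0. -/
open Filter

/-- Let `T̂` be nonnegative with `T̂ 0 = 0` and `Σ_{n=1}^∞ T̂ n < 1`,
and let `f` be a bounded nonnegative sequence tending to `0`. If
`σ k = f k + Σ_{n=1}^k T̂ n ⬝ σ (k-n)` for all `k`, then `σ k → 0`. -/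
theorem stmt17
    (T : ℕ → ℝ) (A : ℝ)
    (hTnonneg : ∀ n, 0 ≤ T n) (hT0 : T 0 = 0)
    (hA : HasSum T A) (hA1 : A < 1)
    (f : ℕ → ℝ)
    (hfnonneg : ∀ k, 0 ≤ f k) (hfbdd : ∃ C, ∀ k, f k ≤ C)
    (hf : Tendsto f atTop (nhds 0))
    (σ : ℕ → ℝ)
    (hσ : ∀ k, σ k = f k + ∑ n ∈ Finset.Icc 1 k, T n * σ (k - n)) :
    Tendsto σ atTop (nhds 0) := by
  -- basic facts
  have hA0 : 0 ≤ A := hA.nonneg hTnonneg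
  have h1A : 0 < 1 - A := by linarith
  obtain ⟨C₀, hC₀⟩ := hfbdd
  have hC0 : 0 ≤ C₀ := le_trans (hfnonneg 0) (hC₀ 0)
  set M : ℝ := C₀ / (1 - A) with hMdef
  have hM0 : 0 ≤ M := div_nonneg hC0 h1A.le
  have hMeq : C₀ + A * M = M := by
    have : M * (1 - A) = C₀ := div_mul_cancel₀ C₀ h1A.ne'
    nlinarith
  have hpart : ∀ s : Finset ℕ, ∑ n ∈ s, T n ≤ A :=
    fun s => sum_le_hasSum s (fun i _ => hTnonneg i) hA
  -- σ is nonnegative and bounded by M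
  have hbound : ∀ k, 0 ≤ σ k ∧ σ k ≤ M := by
    intro k
    induction k using Nat.strong_induction_on with
    | _ k ih =>
      rw [hσ k]
      have hmem : ∀ n ∈ Finset.Icc 1 k, 0 ≤ σ (k - n) ∧ σ (k - n) ≤ M := by
        intro n hn
        simp only [Finset.mem_Icc] at hn
        exact ih (k - n) (by omega)
      constructor
      · refine add_nonneg (hfnonneg k) (Finset.sum_nonneg fun n hn => ?_)
        exact mul_nonneg (hTnonneg n) (hmem n hn).1
      · have h1 : ∑ n ∈ Finset.Icc 1 k, T n * σ (k - n) ≤ ∑ n ∈ Finset.Icc 1 k, T n * M :=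
          Finset.sum_le_sum fun n hn => mul_le_mul_of_nonneg_left (hmem n hn).2 (hTnonneg n)
        have h2 : ∑ n ∈ Finset.Icc 1 k, T n * M ≤ A * M := by
          rw [← Finset.sum_mul]
          exact mul_le_mul_of_nonneg_right (hpart _) hM0
        have := hC₀ k
        linarith
  -- key improvement step : an eventual bound B improves to A*B + ε
  have key : ∀ B : ℝ, 0 ≤ B → (∀ᶠ k in atTop, σ k ≤ B) → ∀ ε : ℝ, 0 < ε →
      ∀ᶠ k in atTop, σ k ≤ A * B + ε := by
    intro B hB hev ε hε
    obtain ⟨N₀, hN₀⟩ := eventually_atTop.1 hev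
    have hε2 : (0:ℝ) < ε / 2 := by linarith
    have hη : (0:ℝ) < ε / (2 * (M + 1)) := by positivity
    set η : ℝ := ε / (2 * (M + 1)) with hηdef
    have hfev : ∀ᶠ k in atTop, f k < ε / 2 := hf.eventually_lt_const hε2
    have htail : ∀ᶠ m in atTop, A - η < ∑ i ∈ Finset.range m, T i :=
      hA.tendsto_sum_nat.eventually_const_lt (by linarith)
    obtain ⟨m₀, hm₀⟩ := eventually_atTop.1 htail
    have hm₀' : A - η < ∑ i ∈ Finset.range m₀, T i := hm₀ m₀ le_rfl
    filter_upwards [hfev, eventually_ge_atTop (N₀ + m₀)] with k hfk hk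
    rw [hσ k]
    have hkN₀ : N₀ ≤ k := by omega
    set m : ℕ := k - N₀ with hmdef
    have hmm₀ : m₀ ≤ m := by omega
    have hmk : m ≤ k := by omega
    rw [show (1:ℕ) = 0 + 1 from rfl, Finset.Icc_add_one_left_eq_Ioc]
    rw [← Finset.sum_Ioc_consecutive (fun n => T n * σ (k - n)) (Nat.zero_le m) hmk]
    -- first part : indices n ≤ m, so k - n ≥ N₀
    have hfirst : ∑ n ∈ Finset.Ioc 0 m, T n * σ (k - n) ≤ A * B := by
      have h1 : ∑ n ∈ Finset.Ioc 0 m, T n * σ (k - n) ≤ ∑ n ∈ Finset.Ioc 0 m, T n * B := by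
        refine Finset.sum_le_sum fun n hn => ?_
        simp only [Finset.mem_Ioc] at hn
        refine mul_le_mul_of_nonneg_left ?_ (hTnonneg n)
        exact hN₀ (k - n) (by omega)
      have h2 : ∑ n ∈ Finset.Ioc 0 m, T n * B ≤ A * B := by
        rw [← Finset.sum_mul]
        exact mul_le_mul_of_nonneg_right (hpart _) hB
      linarith
    -- second part : tail of the series
    have hsecond : ∑ n ∈ Finset.Ioc m k, T n * σ (k - n) ≤ ε / 2 := by
      have hTtail : ∑ n ∈ Finset.Ioc m k, T n ≤ η := by
        have hdisj : Disjoint (Finset.range m₀) (Finset.Ioc m k) := by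
          rw [Finset.disjoint_left]
          intro a ha hb
          simp only [Finset.mem_range] at ha
          simp only [Finset.mem_Ioc] at hb
          omega
        have := hpart (Finset.range m₀ ∪ Finset.Ioc m k)
        rw [Finset.sum_union hdisj] at this
        linarith
      have h1 : ∑ n ∈ Finset.Ioc m k, T n * σ (k - n) ≤ ∑ n ∈ Finset.Ioc m k, T n * M := by
        refine Finset.sum_le_sum fun n hn => ?_
        exact mul_le_mul_of_nonneg_left (hbound (k - n)).2 (hTnonneg n)
      have h2 : ∑ n ∈ Finset.Ioc m k, T n * M ≤ η * M := by
        rw [← Finset.sum_mul]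
        exact mul_le_mul_of_nonneg_right hTtail hM0
      have h3 : η * M ≤ ε / 2 := by
        rw [hηdef, div_mul_eq_mul_div, div_le_iff₀ (by positivity)]
        nlinarith
      linarith
    linarith
  -- iterate the improvement
  have iter : ∀ ε : ℝ, 0 < ε → ∀ j : ℕ, ∀ᶠ k in atTop, σ k ≤ A ^ j * M + ε / 2 := by
    intro ε hε j
    induction j with
    | zero =>
      filter_upwards with k
      have := (hbound k).2
      simp only [pow_zero, one_mul]
      linarith
    | succ j ih =>
      have hBnn : 0 ≤ A ^ j * M + ε / 2 := by positivity
      have hδ : (0:ℝ) < (1 - A) * ε / 2 := by positivity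
      have := key _ hBnn ih _ hδ
      refine this.mono fun k hk => ?_
      have : A * (A ^ j * M + ε / 2) + (1 - A) * ε / 2 = A ^ (j + 1) * M + ε / 2 := by ring
      linarith
  -- conclude
  rw [Metric.tendsto_atTop]
  intro ε hε
  have hε2 : (0:ℝ) < ε / 2 := by linarith
  obtain ⟨j, hj⟩ : ∃ j : ℕ, A ^ j * M < ε / 4 := by
    have hpow : Tendsto (fun j : ℕ => A ^ j * M) atTop (nhds 0) := by
      simpa using (tendsto_pow_atTop_nhds_zero_of_lt_one hA0 hA1).mul_const M
    exact (eventually_atTop.1 (hpow.eventually_lt_const (by linarith))).imp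
      fun j h => h j le_rfl
  obtain ⟨N, hN⟩ := eventually_atTop.1 (iter (ε / 2) hε2 j)
  refine ⟨N, fun k hk => ?_⟩
  have h1 := hN k hk
  have h2 := (hbound k).1
  rw [Real.dist_eq, sub_zero, abs_of_nonneg h2]
  linarith
end

section
/- Let {d(k)}_{k∈ℤ} and {u(k)}_{k∈ℤ} be square-integrable random variables with u(l) = 0 for l < 0, and let g : ℤ → ℝ satisfy g(m) = 0 for m < 0. Assume the second-order statistics: E[d(m)²] = Σ_{i=0}^{τ̄} α_i² p_i (1−p_i) E[u(m−i)²] for all m, and E[d(m₁)·d(m₂)] = −Σ_{i₁=0}^{τ̄} Σ_{i₂=0}^{τ̄} δ(m₁−i₁−m₂+i₂)·α_{i₁} α_{i₂} p_{i₁} p_{i₂}·E[u(m₁−i₁)²] for all m₁ ≠ m₂, where δ is the Kronecker delta and Σ_{i=0}^{τ̄} p_i = 1. Then for every k ≥ 0: E[(Σ_{n=0}^{k} g(n)·d(k−n))²] = Σ_{l=0}^{k} ( (1/2)·Σ_{i₁=0}^{τ̄} Σ_{i₂=0}^{τ̄} (g(k−i₁−l)·α_{i₁} − g(k−i₂−l)·α_{i₂})²·p_{i₁}·p_{i₂}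 )·E[u(l)²]. -/
open MeasureTheory

section Aux

/-- Hölder: product of two L² functions is integrable. -/
lemma aux_mul_integrable {Ωs : Type*} [MeasurableSpace Ωs] {μ : Measure Ωs}
    {f h : Ωs → ℝ} (hf : MemLp f 2 μ) (hh : MemLp h 2 μ) :
    Integrable (fun x => f x * h x) μ := by
  have hm : MemLp (f • h) 1 μ := hh.smul hf
  rw [memLp_one_iff_integrable] at hm
  exact hm

/-- Reindexing a convolution-type sum. -/
lemma aux_sum_shift (k : ℕ) (c : ℤ) (hc : c ≤ (k : ℤ)) (H : ℤ → ℝ)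
    (h0 : ∀ m : ℤ, m < 0 → H m = 0) (h1 : ∀ m : ℤ, c < m → H m = 0) :
    ∑ n ∈ Finset.range (k + 1), H (n : ℤ)
      = ∑ l ∈ Finset.range (k + 1), H (c - (l : ℤ)) := by
  rcases lt_or_ge c 0 with hneg | hpos
  · rw [Finset.sum_eq_zero fun n _ => h1 _ (by omega),
      Finset.sum_eq_zero fun l _ => h0 _ (by omega)]
  · obtain ⟨j, rfl⟩ : ∃ j : ℕ, c = (j : ℤ) := ⟨c.toNat, (Int.toNat_of_nonneg hpos).symm⟩
    have hjk : j + 1 ≤ k + 1 := by omega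
    rw [← Finset.sum_subset (Finset.range_subset_range.mpr hjk)
        (fun n _ hn => h1 _ (by simp only [Finset.mem_range] at hn; omega)),
      ← Finset.sum_subset (Finset.range_subset_range.mpr hjk)
        (fun l _ hl => h0 _ (by simp only [Finset.mem_range] at hl; omega)),
      ← Finset.sum_range_reflect (fun l => H ((j : ℤ) - (l : ℤ))) (j + 1)]
    refine Finset.sum_congr rfl fun n hn => ?_
    simp only [Finset.mem_range] at hn
    congr 1
    omega

/-- Collapsing a Kronecker delta inside a causal sum. -/
lemma aux_pick (k : ℕ) (g : ℤ → ℝ) (hg0 : ∀ m : ℤ, m < 0 → g m = 0)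
    (w i₁ i₂ : ℤ) (A : ℝ) (hA : (k : ℤ) < w + i₁ - i₂ → A = 0) :
    ∑ n ∈ Finset.range (k + 1),
        g (n : ℤ) * ((if w + i₁ - (n : ℤ) - i₂ = 0 then (1 : ℝ) else 0) * A)
      = g (w + i₁ - i₂) * A := by
  rcases lt_or_ge ((k : ℤ)) (w + i₁ - i₂) with hvk | hvk
  · rw [hA hvk, mul_zero]
    exact Finset.sum_eq_zero fun n _ => by simp
  rcases lt_or_ge (w + i₁ - i₂) 0 with hv0 | hv0
  · rw [hg0 _ hv0, zero_mul]
    exact Finset.sum_eq_zero fun n _ => by rw [if_neg (by omega), zero_mul, mul_zero]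
  · obtain ⟨j, hj⟩ : ∃ j : ℕ, w + i₁ - i₂ = (j : ℤ) :=
      ⟨(w + i₁ - i₂).toNat, (Int.toNat_of_nonneg hv0).symm⟩
    rw [Finset.sum_eq_single_of_mem j (Finset.mem_range.mpr (by omega))]
    · rw [if_pos (by omega), one_mul, hj]
    · intro n _ hne
      rw [if_neg (by omega), zero_mul, mul_zero]

/-- Variance-like expansion of the symmetric double sum. -/
lemma aux_coef {T : Finset ℕ} (p a : ℕ → ℝ) (hpsum : ∑ i ∈ T, p i = 1) :
    (1 / 2 : ℝ) * ∑ i₁ ∈ T, ∑ i₂ ∈ T, (a i₁ - a i₂) ^ 2 * p i₁ * p i₂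
      = (∑ i ∈ T, a i ^ 2 * p i)
        - ∑ i₁ ∈ T, ∑ i₂ ∈ T, a i₁ * a i₂ * p i₁ * p i₂ := by
  have h1 : ∑ i₁ ∈ T, ∑ i₂ ∈ T, (a i₁ - a i₂) ^ 2 * p i₁ * p i₂
      = ∑ i₁ ∈ T, ∑ i₂ ∈ T,
          (a i₁ ^ 2 * p i₁ * p i₂ + a i₂ ^ 2 * p i₂ * p i₁
            - 2 * (a i₁ * a i₂ * p i₁ * p i₂)) :=
    Finset.sum_congr rfl fun _ _ => Finset.sum_congr rfl fun _ _ => by ring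
  have e1 : ∑ i₁ ∈ T, ∑ i₂ ∈ T, a i₁ ^ 2 * p i₁ * p i₂ = ∑ i ∈ T, a i ^ 2 * p i :=
    Finset.sum_congr rfl fun i₁ _ => by rw [← Finset.mul_sum, hpsum, mul_one]
  have e2 : ∑ i₁ ∈ T, ∑ i₂ ∈ T, a i₂ ^ 2 * p i₂ * p i₁ = ∑ i ∈ T, a i ^ 2 * p i := by
    rw [Finset.sum_comm]
    exact Finset.sum_congr rfl fun i _ => by rw [← Finset.mul_sum, hpsum, mul_one]
  have e3 : ∑ i₁ ∈ T, ∑ i₂ ∈ T, (2 : ℝ) * (a i₁ * a i₂ * p i₁ * p i₂)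
      = 2 * ∑ i₁ ∈ T, ∑ i₂ ∈ T, a i₁ * a i₂ * p i₁ * p i₂ := by
    simp_rw [← Finset.mul_sum]
  rw [h1]
  simp only [Finset.sum_sub_distrib, Finset.sum_add_distrib]
  rw [e1, e2, e3]
  ring

end Aux

/-- Given square-integrable processes `d, u` (with `u l = 0` for `l < 0`),
a causal impulse response `g` (`g m = 0` for `m < 0`), a probability vector `p` and weights
`α`, suppose `E[d m ^ 2] = Σ_i α i ^ 2 p i (1 - p i) E[u (m-i) ^ 2]` and, for `m₁ ≠ m₂`,
`E[d m₁ ⬝ d m₂] = -Σ_{i₁,i₂} δ(m₁-i₁-m₂+i₂) α i₁ α i₂ p i₁ p i₂ E[u (m₁-i₁) ^ 2]`.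
Then for every `k ≥ 0`,
`E[(Σ_{n=0}^k g n ⬝ d (k-n)) ^ 2]
  = Σ_{l=0}^k ((1/2) Σ_{i₁,i₂} (g (k-i₁-l) α i₁ - g (k-i₂-l) α i₂) ^ 2 p i₁ p i₂) E[u l ^ 2]`. -/
theorem stmt18
    {Ωs : Type*} [MeasurableSpace Ωs] (μ : Measure Ωs) [IsProbabilityMeasure μ]
    (τbar : ℕ) (p α : ℕ → ℝ)
    (hp : ∀ i, 0 ≤ p i) (hpsum : ∑ i ∈ Finset.range (τbar + 1), p i = 1)
    (d u : ℤ → Ωs → ℝ) (g : ℤ → ℝ)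
    (hdmeas : ∀ m, Measurable (d m)) (humeas : ∀ m, Measurable (u m))
    (hdL2 : ∀ m, MemLp (d m) 2 μ) (huL2 : ∀ m, MemLp (u m) 2 μ)
    (hu0 : ∀ l : ℤ, l < 0 → u l = 0)
    (hg0 : ∀ m : ℤ, m < 0 → g m = 0)
    (hdvar : ∀ m : ℤ, (∫ x, d m x ^ 2 ∂μ) =
      ∑ i ∈ Finset.range (τbar + 1),
        α i ^ 2 * p i * (1 - p i) * ∫ x, u (m - (i : ℤ)) x ^ 2 ∂μ)
    (hdcov : ∀ m₁ m₂ : ℤ, m₁ ≠ m₂ → (∫ x, d m₁ x * d m₂ x ∂μ) =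
      -∑ i₁ ∈ Finset.range (τbar + 1), ∑ i₂ ∈ Finset.range (τbar + 1),
        (if m₁ - (i₁ : ℤ) - m₂ + (i₂ : ℤ) = 0 then (1 : ℝ) else 0) *
          α i₁ * α i₂ * p i₁ * p i₂ * ∫ x, u (m₁ - (i₁ : ℤ)) x ^ 2 ∂μ)
    (k : ℕ) :
    (∫ x, (∑ n ∈ Finset.range (k + 1), g (n : ℤ) * d ((k : ℤ) - (n : ℤ)) x) ^ 2 ∂μ) =
      ∑ l ∈ Finset.range (k + 1),
        ((1 / 2) * ∑ i₁ ∈ Finset.range (τbar + 1), ∑ i₂ ∈ Finset.range (τbar + 1),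
          (g ((k : ℤ) - (i₁ : ℤ) - (l : ℤ)) * α i₁ -
            g ((k : ℤ) - (i₂ : ℤ) - (l : ℤ)) * α i₂) ^ 2 * p i₁ * p i₂) *
        ∫ x, u (l : ℤ) x ^ 2 ∂μ := by
  classical
  have hmul : ∀ a b : ℤ, Integrable (fun x => d a x * d b x) μ :=
    fun a b => aux_mul_integrable (hdL2 a) (hdL2 b)
  have hE0 : ∀ l : ℤ, l < 0 → (∫ x, u l x ^ 2 ∂μ) = 0 := by
    intro l hl; rw [hu0 l hl]; simp
  -- Step 1: expand the square of the sum
  have step1 : (∫ x, (∑ n ∈ Finset.range (k + 1), g (n : ℤ) * d ((k : ℤ) - (n : ℤ)) x) ^ 2 ∂μ)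
      = ∑ n₁ ∈ Finset.range (k + 1), ∑ n₂ ∈ Finset.range (k + 1),
          g (n₁ : ℤ) * g (n₂ : ℤ) *
            ∫ x, d ((k : ℤ) - n₁) x * d ((k : ℤ) - n₂) x ∂μ := by
    have h1 : (fun x => (∑ n ∈ Finset.range (k + 1), g (n : ℤ) * d ((k : ℤ) - n) x) ^ 2)
        = fun x => ∑ n₁ ∈ Finset.range (k + 1), ∑ n₂ ∈ Finset.range (k + 1),
            g (n₁ : ℤ) * g (n₂ : ℤ) * (d ((k : ℤ) - n₁) x * d ((k : ℤ) - n₂) x) := by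
      funext x
      rw [sq, Finset.sum_mul_sum]
      exact Finset.sum_congr rfl fun n₁ _ => Finset.sum_congr rfl fun n₂ _ => by ring
    rw [h1, integral_finset_sum _ (fun n₁ _ =>
      integrable_finset_sum _ (fun n₂ _ => (hmul _ _).const_mul _))]
    refine Finset.sum_congr rfl fun n₁ _ => ?_
    rw [integral_finset_sum _ (fun n₂ _ => (hmul _ _).const_mul _)]
    exact Finset.sum_congr rfl fun n₂ _ => integral_const_mul _ _
  -- Step 2: the second-order statistics in unified form
  have step2 : ∀ n₁ ∈ Finset.range (k + 1), ∀ n₂ ∈ Finset.range (k + 1),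
      (∫ x, d ((k : ℤ) - n₁) x * d ((k : ℤ) - n₂) x ∂μ)
        = (if n₁ = n₂ then
            ∑ i ∈ Finset.range (τbar + 1),
              α i ^ 2 * p i * ∫ x, u ((k : ℤ) - n₁ - i) x ^ 2 ∂μ
          else 0)
          - ∑ i₁ ∈ Finset.range (τbar + 1), ∑ i₂ ∈ Finset.range (τbar + 1),
              (if (n₁ : ℤ) + i₁ - n₂ - i₂ = 0 then (1 : ℝ) else 0) *
                α i₁ * α i₂ * p i₁ * p i₂ * ∫ x, u ((k : ℤ) - n₁ - i₁) x ^ 2 ∂μ := by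
    intro n₁ _ n₂ _
    by_cases hne : n₁ = n₂
    · subst hne
      rw [if_pos rfl]
      have hL : (∫ x, d ((k : ℤ) - n₁) x * d ((k : ℤ) - n₁) x ∂μ)
          = ∫ x, d ((k : ℤ) - n₁) x ^ 2 ∂μ := by
        congr 1; funext x; ring
      rw [hL, hdvar]
      have hδ : ∀ i₁ ∈ Finset.range (τbar + 1),
          (∑ i₂ ∈ Finset.range (τbar + 1),
            (if (n₁ : ℤ) + i₁ - n₁ - i₂ = 0 then (1 : ℝ) else 0) *
              α i₁ * α i₂ * p i₁ * p i₂ * ∫ x, u ((k : ℤ) - n₁ - i₁) x ^ 2 ∂μ)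
          = α i₁ ^ 2 * p i₁ ^ 2 * ∫ x, u ((k : ℤ) - n₁ - i₁) x ^ 2 ∂μ := by
        intro i₁ hi₁
        rw [Finset.sum_eq_single_of_mem i₁ hi₁]
        · rw [if_pos (by omega)]; ring
        · intro i₂ _ hne2
          rw [if_neg (by omega)]
          ring
      rw [Finset.sum_congr rfl hδ, ← Finset.sum_sub_distrib]
      exact Finset.sum_congr rfl fun i _ => by ring
    · rw [if_neg hne, zero_sub]
      have hm : ((k : ℤ) - n₁) ≠ ((k : ℤ) - n₂) := by omega
      rw [hdcov _ _ hm, neg_inj]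
      refine Finset.sum_congr rfl fun i₁ _ => Finset.sum_congr rfl fun i₂ _ => ?_
      simp only [show ((k : ℤ) - n₁ - i₁ - ((k : ℤ) - n₂) + i₂ = 0)
            ↔ ((n₁ : ℤ) + i₁ - n₂ - i₂ = 0) from by omega]
  -- the diagonal part
  have hA : (∑ n₁ ∈ Finset.range (k + 1), ∑ n₂ ∈ Finset.range (k + 1),
        g (n₁ : ℤ) * g (n₂ : ℤ) * (if n₁ = n₂ then
          ∑ i ∈ Finset.range (τbar + 1),
            α i ^ 2 * p i * ∫ x, u ((k : ℤ) - n₁ - i) x ^ 2 ∂μ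
        else 0))
      = ∑ i ∈ Finset.range (τbar + 1), ∑ l ∈ Finset.range (k + 1),
          g ((k : ℤ) - i - l) ^ 2 * α i ^ 2 * p i * ∫ x, u (l : ℤ) x ^ 2 ∂μ := by
    have h1 : ∀ n₁ ∈ Finset.range (k + 1),
        (∑ n₂ ∈ Finset.range (k + 1),
          g (n₁ : ℤ) * g (n₂ : ℤ) * (if n₁ = n₂ then
            ∑ i ∈ Finset.range (τbar + 1),
              α i ^ 2 * p i * ∫ x, u ((k : ℤ) - n₁ - i) x ^ 2 ∂μ
          else 0))
        = ∑ i ∈ Finset.range (τbar + 1),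
            g (n₁ : ℤ) * g (n₁ : ℤ) *
              (α i ^ 2 * p i * ∫ x, u ((k : ℤ) - n₁ - i) x ^ 2 ∂μ) := by
      intro n₁ h₁
      rw [Finset.sum_eq_single_of_mem n₁ h₁
        (fun n₂ _ hne => by rw [if_neg (fun h => hne h.symm), mul_zero]),
        if_pos rfl, Finset.mul_sum]
    rw [Finset.sum_congr rfl h1, Finset.sum_comm]
    refine Finset.sum_congr rfl fun i hi => ?_
    have h0 : ∀ m : ℤ, m < 0 →
        g m * g m * (α i ^ 2 * p i * ∫ x, u ((k : ℤ) - i - m) x ^ 2 ∂μ) = 0 := by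
      intro m hm; rw [hg0 m hm]; ring
    have h1' : ∀ m : ℤ, (k : ℤ) - i < m →
        g m * g m * (α i ^ 2 * p i * ∫ x, u ((k : ℤ) - i - m) x ^ 2 ∂μ) = 0 := by
      intro m hm; rw [hE0 _ (by omega)]; ring
    have := aux_sum_shift k ((k : ℤ) - i) (by omega)
      (fun m => g m * g m * (α i ^ 2 * p i * ∫ x, u ((k : ℤ) - i - m) x ^ 2 ∂μ)) h0 h1'
    calc (∑ n ∈ Finset.range (k + 1),
          g (n : ℤ) * g (n : ℤ) * (α i ^ 2 * p i * ∫ x, u ((k : ℤ) - n - i) x ^ 2 ∂μ))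
        = ∑ n ∈ Finset.range (k + 1),
            g (n : ℤ) * g (n : ℤ) * (α i ^ 2 * p i * ∫ x, u ((k : ℤ) - i - n) x ^ 2 ∂μ) := by
          refine Finset.sum_congr rfl fun n _ => ?_
          rw [show (k : ℤ) - n - i = (k : ℤ) - i - n from by ring]
      _ = ∑ l ∈ Finset.range (k + 1),
            g ((k : ℤ) - i - l) * g ((k : ℤ) - i - l) *
              (α i ^ 2 * p i * ∫ x, u ((k : ℤ) - i - ((k : ℤ) - i - l)) x ^ 2 ∂μ) := this
      _ = ∑ l ∈ Finset.range (k + 1),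
            g ((k : ℤ) - i - l) ^ 2 * α i ^ 2 * p i * ∫ x, u (l : ℤ) x ^ 2 ∂μ := by
          refine Finset.sum_congr rfl fun l _ => ?_
          rw [show (k : ℤ) - i - ((k : ℤ) - i - l) = (l : ℤ) from by ring]
          ring
  -- the correlation part
  have hB : (∑ n₁ ∈ Finset.range (k + 1), ∑ n₂ ∈ Finset.range (k + 1),
        ∑ i₁ ∈ Finset.range (τbar + 1), ∑ i₂ ∈ Finset.range (τbar + 1),
          g (n₁ : ℤ) * (g (n₂ : ℤ) *
            ((if (n₁ : ℤ) + i₁ - n₂ - i₂ = 0 then (1 : ℝ) else 0) *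
              (α i₁ * α i₂ * p i₁ * p i₂ * ∫ x, u ((k : ℤ) - n₁ - i₁) x ^ 2 ∂μ))))
      = ∑ i₁ ∈ Finset.range (τbar + 1), ∑ i₂ ∈ Finset.range (τbar + 1),
          ∑ l ∈ Finset.range (k + 1),
            g ((k : ℤ) - i₁ - l) * g ((k : ℤ) - i₂ - l) *
              α i₁ * α i₂ * p i₁ * p i₂ * ∫ x, u (l : ℤ) x ^ 2 ∂μ := by
    have h1 : ∀ n₁ ∈ Finset.range (k + 1),
        (∑ n₂ ∈ Finset.range (k + 1),
          ∑ i₁ ∈ Finset.range (τbar + 1), ∑ i₂ ∈ Finset.range (τbar + 1),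
            g (n₁ : ℤ) * (g (n₂ : ℤ) *
              ((if (n₁ : ℤ) + i₁ - n₂ - i₂ = 0 then (1 : ℝ) else 0) *
                (α i₁ * α i₂ * p i₁ * p i₂ * ∫ x, u ((k : ℤ) - n₁ - i₁) x ^ 2 ∂μ))))
        = ∑ i₁ ∈ Finset.range (τbar + 1), ∑ i₂ ∈ Finset.range (τbar + 1),
            g (n₁ : ℤ) * (g ((n₁ : ℤ) + i₁ - i₂) *
              (α i₁ * α i₂ * p i₁ * p i₂ * ∫ x, u ((k : ℤ) - n₁ - i₁) x ^ 2 ∂μ)) := by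
      intro n₁ _
      rw [Finset.sum_comm]
      refine Finset.sum_congr rfl fun i₁ _ => ?_
      rw [Finset.sum_comm]
      refine Finset.sum_congr rfl fun i₂ _ => ?_
      rw [← Finset.mul_sum]
      congr 1
      exact aux_pick k g hg0 (n₁ : ℤ) (i₁ : ℤ) (i₂ : ℤ)
        (α i₁ * α i₂ * p i₁ * p i₂ * ∫ x, u ((k : ℤ) - n₁ - i₁) x ^ 2 ∂μ)
        (fun h => by rw [hE0 _ (by omega), mul_zero])
    rw [Finset.sum_congr rfl h1, Finset.sum_comm]
    refine Finset.sum_congr rfl fun i₁ _ => ?_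
    rw [Finset.sum_comm]
    refine Finset.sum_congr rfl fun i₂ _ => ?_
    have h0 : ∀ m : ℤ, m < 0 →
        g m * (g (m + i₁ - i₂) *
          (α i₁ * α i₂ * p i₁ * p i₂ * ∫ x, u ((k : ℤ) - i₁ - m) x ^ 2 ∂μ)) = 0 := by
      intro m hm; rw [hg0 m hm]; ring
    have h1' : ∀ m : ℤ, (k : ℤ) - i₁ < m →
        g m * (g (m + i₁ - i₂) *
          (α i₁ * α i₂ * p i₁ * p i₂ * ∫ x, u ((k : ℤ) - i₁ - m) x ^ 2 ∂μ)) = 0 := by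
      intro m hm; rw [hE0 _ (by omega)]; ring
    have := aux_sum_shift k ((k : ℤ) - i₁) (by omega)
      (fun m => g m * (g (m + i₁ - i₂) *
        (α i₁ * α i₂ * p i₁ * p i₂ * ∫ x, u ((k : ℤ) - i₁ - m) x ^ 2 ∂μ))) h0 h1'
    calc (∑ n₁ ∈ Finset.range (k + 1),
          g (n₁ : ℤ) * (g ((n₁ : ℤ) + i₁ - i₂) *
            (α i₁ * α i₂ * p i₁ * p i₂ * ∫ x, u ((k : ℤ) - n₁ - i₁) x ^ 2 ∂μ)))
        = ∑ n₁ ∈ Finset.range (k + 1),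
            g (n₁ : ℤ) * (g ((n₁ : ℤ) + i₁ - i₂) *
              (α i₁ * α i₂ * p i₁ * p i₂ * ∫ x, u ((k : ℤ) - i₁ - n₁) x ^ 2 ∂μ)) := by
          refine Finset.sum_congr rfl fun n _ => ?_
          rw [show (k : ℤ) - n - i₁ = (k : ℤ) - i₁ - n from by ring]
      _ = ∑ l ∈ Finset.range (k + 1),
            g ((k : ℤ) - i₁ - l) * (g (((k : ℤ) - i₁ - l) + i₁ - i₂) *
              (α i₁ * α i₂ * p i₁ * p i₂ *
                ∫ x, u ((k : ℤ) - i₁ - ((k : ℤ) - i₁ - l)) x ^ 2 ∂μ)) := this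
      _ = ∑ l ∈ Finset.range (k + 1),
            g ((k : ℤ) - i₁ - l) * g ((k : ℤ) - i₂ - l) *
              α i₁ * α i₂ * p i₁ * p i₂ * ∫ x, u (l : ℤ) x ^ 2 ∂μ := by
          refine Finset.sum_congr rfl fun l _ => ?_
          rw [show ((k : ℤ) - i₁ - l) + i₁ - i₂ = (k : ℤ) - i₂ - l from by ring,
            show (k : ℤ) - i₁ - ((k : ℤ) - i₁ - l) = (l : ℤ) from by ring]
          ring
  -- rewrite the right-hand side
  have hR : (∑ l ∈ Finset.range (k + 1),
        ((1 / 2 : ℝ) * ∑ i₁ ∈ Finset.range (τbar + 1), ∑ i₂ ∈ Finset.range (τbar + 1),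
          (g ((k : ℤ) - (i₁ : ℤ) - (l : ℤ)) * α i₁ -
            g ((k : ℤ) - (i₂ : ℤ) - (l : ℤ)) * α i₂) ^ 2 * p i₁ * p i₂) *
        ∫ x, u (l : ℤ) x ^ 2 ∂μ)
      = (∑ i ∈ Finset.range (τbar + 1), ∑ l ∈ Finset.range (k + 1),
          g ((k : ℤ) - i - l) ^ 2 * α i ^ 2 * p i * ∫ x, u (l : ℤ) x ^ 2 ∂μ)
        - ∑ i₁ ∈ Finset.range (τbar + 1), ∑ i₂ ∈ Finset.range (τbar + 1),
            ∑ l ∈ Finset.range (k + 1),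
              g ((k : ℤ) - i₁ - l) * g ((k : ℤ) - i₂ - l) *
                α i₁ * α i₂ * p i₁ * p i₂ * ∫ x, u (l : ℤ) x ^ 2 ∂μ := by
    have hc : ∀ l ∈ Finset.range (k + 1),
        ((1 / 2 : ℝ) * ∑ i₁ ∈ Finset.range (τbar + 1), ∑ i₂ ∈ Finset.range (τbar + 1),
          (g ((k : ℤ) - (i₁ : ℤ) - (l : ℤ)) * α i₁ -
            g ((k : ℤ) - (i₂ : ℤ) - (l : ℤ)) * α i₂) ^ 2 * p i₁ * p i₂) *
          ∫ x, u (l : ℤ) x ^ 2 ∂μ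
        = ((∑ i ∈ Finset.range (τbar + 1),
              (g ((k : ℤ) - i - l) * α i) ^ 2 * p i)
            - ∑ i₁ ∈ Finset.range (τbar + 1), ∑ i₂ ∈ Finset.range (τbar + 1),
                (g ((k : ℤ) - i₁ - l) * α i₁) * (g ((k : ℤ) - i₂ - l) * α i₂) *
                  p i₁ * p i₂) *
            ∫ x, u (l : ℤ) x ^ 2 ∂μ := by
      intro l _
      rw [aux_coef p (fun i => g ((k : ℤ) - i - l) * α i) hpsum]
    rw [Finset.sum_congr rfl hc]
    simp only [sub_mul, Finset.sum_sub_distrib]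
    congr 1
    · rw [Finset.sum_comm]
      refine Finset.sum_congr rfl fun i _ => ?_
      rw [Finset.sum_mul]
      exact Finset.sum_congr rfl fun l _ => by ring
    · calc (∑ l ∈ Finset.range (k + 1),
            (∑ i₁ ∈ Finset.range (τbar + 1), ∑ i₂ ∈ Finset.range (τbar + 1),
              (g ((k : ℤ) - i₁ - l) * α i₁) * (g ((k : ℤ) - i₂ - l) * α i₂) *
                p i₁ * p i₂) * ∫ x, u (l : ℤ) x ^ 2 ∂μ)
          = ∑ l ∈ Finset.range (k + 1), ∑ i₁ ∈ Finset.range (τbar + 1),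
              ∑ i₂ ∈ Finset.range (τbar + 1),
                g ((k : ℤ) - i₁ - l) * g ((k : ℤ) - i₂ - l) *
                  α i₁ * α i₂ * p i₁ * p i₂ * ∫ x, u (l : ℤ) x ^ 2 ∂μ := by
            refine Finset.sum_congr rfl fun l _ => ?_
            rw [Finset.sum_mul]
            refine Finset.sum_congr rfl fun i₁ _ => ?_
            rw [Finset.sum_mul]
            exact Finset.sum_congr rfl fun i₂ _ => by ring
        _ = _ := by
            rw [Finset.sum_comm]
            exact Finset.sum_congr rfl fun i₁ _ => Finset.sum_comm
  -- assemble
  rw [step1, hR, ← hA, ← hB, ← Finset.sum_sub_distrib]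
  refine Finset.sum_congr rfl fun n₁ h₁ => ?_
  rw [← Finset.sum_sub_distrib]
  refine Finset.sum_congr rfl fun n₂ h₂ => ?_
  rw [step2 n₁ h₁ n₂ h₂, mul_sub]
  congr 1
  rw [Finset.mul_sum]
  refine Finset.sum_congr rfl fun i₁ _ => ?_
  rw [Finset.mul_sum]
  exact Finset.sum_congr rfl fun i₂ _ => by ring
end
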